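/- Let (M, d, μ) be a metric measure space with V(x,r) = μ(B(x,r)) satisfying C_1^{−1}·λ^{γ_1} ≤ V(x, λr)/V(x, r) ≤ C_1·λ^{γ_2} for all x ∈ M, λ > 1 and r > 0, for some C_1 ≥ 1 and γ_2 ≥ γ_1 > 0. Suppose there are C_2 ≥ 1 and α > 0 such that a measurable p: (0,∞) × M × M → [0,∞) satisfies C_2^{−1}·(1/V(x, s^{1/α}))·1_{{d(x,y)^α ≤ s}} ≤ p(s; x, y) ≤ C_2·min{1/V(x, s^{1/α}), s/(V(x, d(x,y))·d(x,y)^α)} for all s > 0 and x, y ∈ M (the second term in the minimum being interpreted as +∞ when x = y). Let φ be a Bernstein function with φ(0) = 0 such that c_4·λ^{β_2}·φ(θ) ≤ φ(λθ) ≤ C_3·λ^{β_1}·φ(θ) for all λ ∈ (0,1] and θ > 0, for some 0 < β_1 ≤ β_2 < 1, c_4 ∈ (0,1] and C_3 ≥ 1, with subordinator laws μ_t and subordinated kernel p_φ(t;x,y) = ∫_{(0,∞)} p(s;x,y) μ_t(ds). Then there exist constants 0 < c ≤ C such that for all t > 0 and x, y ∈ M: c·m(t,x,y) ≤ p_φ(t;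 x, y) ≤ C·m(t,x,y), where m(t,x,y) = min{1/V(x, (φ^{−1}(1/t))^{−1/α}), t·φ(d(x,y)^{−α})/V(x, d(x,y))}, the second term interpreted as +∞ when x = y, and φ^{−1}(u) = inf{θ > 0 : φ(θ) ≥ u}. -/

import Mathlib

open MeasureTheory Real Set Classical
open scoped ENNReal NNReal

noncomputable section

/-- A Bernstein function: continuous on `[0,∞)`, smooth on `(0,∞)`, nonnegative, and
`(-1)^(n-1) φ^(n)(u) ≥ 0` for all `u > 0` and `n ≥ 1`. -/
def IsBernstein (φ : ℝ → ℝ) : Prop :=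
  ContinuousOn φ (Set.Ici 0) ∧ ContDiffOn ℝ (⊤ : ℕ∞) φ (Set.Ioi 0) ∧
  (∀ x ∈ Set.Ici (0 : ℝ), 0 ≤ φ x) ∧
  ∀ n : ℕ, 1 ≤ n → ∀ u : ℝ, 0 < u → 0 ≤ (-1 : ℝ) ^ (n - 1) * iteratedDeriv n φ u

/-- `μ t` is the law of the subordinator with Laplace exponent `φ` at time `t > 0`. -/
def IsSubordinatorLaw (φ : ℝ → ℝ) (μ : ℝ → Measure ℝ) : Prop :=
  ∀ t : ℝ, 0 < t →
    IsProbabilityMeasure (μ t) ∧ μ t (Set.Iio 0) = 0 ∧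
    ∀ l : ℝ, 0 ≤ l → (∫ s, Real.exp (-l * s) ∂μ t) = Real.exp (-t * φ l)

/-- Generalized inverse of an increasing function: `φ⁻¹(u) = inf {θ > 0 : φ(θ) ≥ u}`. -/
def genInv (φ : ℝ → ℝ) (u : ℝ) : ℝ := sInf {θ : ℝ | 0 < θ ∧ u ≤ φ θ}

theorem one_sub_exp_le (y : ℝ) : 1 - Real.exp (-y) ≤ y := by nlinarith [Real.add_one_le_exp (-y)]

theorem E1pos : 0 < 1 - Real.exp (-1) := by
  have : Real.exp (-1) < Real.exp 0 := Real.exp_lt_exp.mpr (by norm_num)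
  rw [Real.exp_zero] at this; linarith

theorem convex_exp_ineq {x : ℝ} (hx : 0 ≤ x) (hx1 : x ≤ 1) :
    (1 - Real.exp (-1)) * x ≤ 1 - Real.exp (-x) := by
  have h := convexOn_exp.2 (Set.mem_univ (0:ℝ)) (Set.mem_univ (-1:ℝ)) (by linarith : (0:ℝ) ≤ 1 - x) hx (by ring)
  simp only [smul_eq_mul] at h
  have e : (1-x) * 0 + x * (-1) = -x := by ring
  rw [e] at h
  nlinarith [Real.exp_zero]

theorem tail_lo (ν : Measure ℝ) [IsProbabilityMeasure ν] (u m : ℝ) (hu : 0 < u)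
    (hI : (∫⁻ s, ENNReal.ofReal (Real.exp (-(u⁻¹ * s))) ∂ν) = ENNReal.ofReal (Real.exp (-m))) :
    ν (Set.Iic u) ≤ ENNReal.ofReal (Real.exp 1 * Real.exp (-m)) := by
  have key : ENNReal.ofReal (Real.exp (-1)) * ν (Set.Iic u) ≤ ENNReal.ofReal (Real.exp (-m)) := by
    rw [← hI]
    calc ENNReal.ofReal (Real.exp (-1)) * ν (Set.Iic u)
        = ∫⁻ _ in Set.Iic u, ENNReal.ofReal (Real.exp (-1)) ∂ν := by
          rw [setLIntegral_const]
      _ ≤ ∫⁻ s in Set.Iic u, ENNReal.ofReal (Real.exp (-(u⁻¹ * s))) ∂ν := by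
          apply setLIntegral_mono (by fun_prop)
          intro s hs
          apply ENNReal.ofReal_le_ofReal
          apply Real.exp_le_exp.mpr
          simp only [Set.mem_Iic] at hs
          have : u⁻¹ * s ≤ 1 := by
            rw [← inv_mul_cancel₀ hu.ne']
            exact mul_le_mul_of_nonneg_left hs (inv_pos.mpr hu).le
          linarith
      _ ≤ ∫⁻ s, ENNReal.ofReal (Real.exp (-(u⁻¹ * s))) ∂ν := setLIntegral_le_lintegral _ _
  calc ν (Set.Iic u) = (ENNReal.ofReal (Real.exp 1) * ENNReal.ofReal (Real.exp (-1))) * ν (Set.Iic u) := by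
        rw [← ENNReal.ofReal_mul (Real.exp_pos 1).le, ← Real.exp_add]
        norm_num
    _ = ENNReal.ofReal (Real.exp 1) * (ENNReal.ofReal (Real.exp (-1)) * ν (Set.Iic u)) := by ring
    _ ≤ ENNReal.ofReal (Real.exp 1) * ENNReal.ofReal (Real.exp (-m)) := mul_le_mul_right key _
    _ = ENNReal.ofReal (Real.exp 1 * Real.exp (-m)) := (ENNReal.ofReal_mul (Real.exp_pos 1).le).symm

theorem tail_up (ν : Measure ℝ) [IsProbabilityMeasure ν] (u m : ℝ) (hu : 0 < u)
    (hI : (∫⁻ s, ENNReal.ofReal (1 - Real.exp (-(u⁻¹ * s))) ∂ν) = ENNReal.ofReal (1 - Real.exp (-m))) :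
    ν (Set.Ioi u) ≤ ENNReal.ofReal ((1 - Real.exp (-1))⁻¹ * (1 - Real.exp (-m))) := by
  have key : ENNReal.ofReal (1 - Real.exp (-1)) * ν (Set.Ioi u) ≤ ENNReal.ofReal (1 - Real.exp (-m)) := by
    rw [← hI]
    calc ENNReal.ofReal (1 - Real.exp (-1)) * ν (Set.Ioi u)
        = ∫⁻ _ in Set.Ioi u, ENNReal.ofReal (1 - Real.exp (-1)) ∂ν := by rw [setLIntegral_const]
      _ ≤ ∫⁻ s in Set.Ioi u, ENNReal.ofReal (1 - Real.exp (-(u⁻¹ * s))) ∂ν := by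
          apply setLIntegral_mono (by fun_prop)
          intro s hs
          apply ENNReal.ofReal_le_ofReal
          have h1 : (1:ℝ) ≤ u⁻¹ * s := by
            rw [Set.mem_Ioi] at hs
            rw [← inv_mul_cancel₀ hu.ne']
            exact mul_le_mul_of_nonneg_left hs.le (inv_pos.mpr hu).le
          have := Real.exp_le_exp.mpr (neg_le_neg h1)
          linarith
      _ ≤ ∫⁻ s, ENNReal.ofReal (1 - Real.exp (-(u⁻¹ * s))) ∂ν := setLIntegral_le_lintegral _ _
  have hpos := E1pos
  calc ν (Set.Ioi u)
      = (ENNReal.ofReal ((1 - Real.exp (-1))⁻¹) * ENNReal.ofReal (1 - Real.exp (-1))) * ν (Set.Ioi u) := by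
        rw [← ENNReal.ofReal_mul (by positivity), inv_mul_cancel₀ hpos.ne']
        norm_num
    _ = ENNReal.ofReal ((1 - Real.exp (-1))⁻¹) * (ENNReal.ofReal (1 - Real.exp (-1)) * ν (Set.Ioi u)) := by ring
    _ ≤ ENNReal.ofReal ((1 - Real.exp (-1))⁻¹) * ENNReal.ofReal (1 - Real.exp (-m)) := mul_le_mul_right key _
    _ = ENNReal.ofReal ((1 - Real.exp (-1))⁻¹ * (1 - Real.exp (-m))) := (ENNReal.ofReal_mul (by positivity)).symm

theorem mean_bd (ν : Measure ℝ) [IsProbabilityMeasure ν] (u m : ℝ) (hu : 0 < u)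
    (hI : (∫⁻ s, ENNReal.ofReal (1 - Real.exp (-(u⁻¹ * s))) ∂ν) = ENNReal.ofReal (1 - Real.exp (-m))) :
    ∫⁻ s in Set.Iic u, ENNReal.ofReal s ∂ν ≤
      ENNReal.ofReal (u * (1 - Real.exp (-1))⁻¹ * (1 - Real.exp (-m))) := by
  have hpos := E1pos
  have hpt : ∀ s ∈ Set.Iic u, ENNReal.ofReal s ≤
      ENNReal.ofReal (u * (1 - Real.exp (-1))⁻¹ * (1 - Real.exp (-(u⁻¹ * s)))) := by
    intro s hs
    rw [Set.mem_Iic] at hs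
    rcases le_or_gt s 0 with h0 | h0
    · rw [ENNReal.ofReal_of_nonpos h0]; exact zero_le
    · apply ENNReal.ofReal_le_ofReal
      have hx0 : 0 ≤ u⁻¹ * s := by positivity
      have hx1 : u⁻¹ * s ≤ 1 := by
        rw [← inv_mul_cancel₀ hu.ne']
        exact mul_le_mul_of_nonneg_left hs (inv_pos.mpr hu).le
      have hcv := convex_exp_ineq hx0 hx1
      have hinv : (1 - Real.exp (-1))⁻¹ * (1 - Real.exp (-1)) = 1 := inv_mul_cancel₀ hpos.ne'
      have h3 : u⁻¹ * s ≤ (1 - Real.exp (-1))⁻¹ * (1 - Real.exp (-(u⁻¹ * s))) := by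
        calc u⁻¹ * s = (1 - Real.exp (-1))⁻¹ * ((1 - Real.exp (-1)) * (u⁻¹ * s)) := by
              rw [← mul_assoc, hinv, one_mul]
          _ ≤ (1 - Real.exp (-1))⁻¹ * (1 - Real.exp (-(u⁻¹ * s))) :=
              mul_le_mul_of_nonneg_left hcv (by positivity)
      calc s = u * (u⁻¹ * s) := by field_simp
        _ ≤ u * ((1 - Real.exp (-1))⁻¹ * (1 - Real.exp (-(u⁻¹ * s)))) :=
            mul_le_mul_of_nonneg_left h3 hu.le
        _ = u * (1 - Real.exp (-1))⁻¹ * (1 - Real.exp (-(u⁻¹ * s))) := by ring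
  calc ∫⁻ s in Set.Iic u, ENNReal.ofReal s ∂ν
      ≤ ∫⁻ s in Set.Iic u, ENNReal.ofReal (u * (1 - Real.exp (-1))⁻¹ * (1 - Real.exp (-(u⁻¹ * s)))) ∂ν :=
        setLIntegral_mono (by fun_prop) hpt
    _ ≤ ∫⁻ s, ENNReal.ofReal (u * (1 - Real.exp (-1))⁻¹ * (1 - Real.exp (-(u⁻¹ * s)))) ∂ν :=
        setLIntegral_le_lintegral _ _
    _ = ENNReal.ofReal (u * (1 - Real.exp (-1))⁻¹) * ∫⁻ s, ENNReal.ofReal (1 - Real.exp (-(u⁻¹ * s))) ∂ν := by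
        rw [← lintegral_const_mul' _ _ ENNReal.ofReal_ne_top]
        congr 1; ext s
        rw [← ENNReal.ofReal_mul (by positivity)]
    _ = ENNReal.ofReal (u * (1 - Real.exp (-1))⁻¹) * ENNReal.ofReal (1 - Real.exp (-m)) := by rw [hI]
    _ = ENNReal.ofReal (u * (1 - Real.exp (-1))⁻¹ * (1 - Real.exp (-m))) :=
        (ENNReal.ofReal_mul (by positivity)).symm


theorem tail_lower (ν : Measure ℝ) [IsProbabilityMeasure ν] (u R mu mR : ℝ) (hu : 0 < u) (hR : 1 ≤ R)
    (hMean : ∫⁻ s in Set.Iic u, ENNReal.ofReal s ∂ν ≤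
      ENNReal.ofReal (u * (1 - Real.exp (-1))⁻¹ * (1 - Real.exp (-mu))))
    (hIR : (∫⁻ s, ENNReal.ofReal (1 - Real.exp (-((R*u)⁻¹ * s))) ∂ν) = ENNReal.ofReal (1 - Real.exp (-mR))) :
    ENNReal.ofReal (1 - Real.exp (-mR)) ≤
      ν (Set.Ioi u) + ENNReal.ofReal (R⁻¹ * ((1 - Real.exp (-1))⁻¹ * (1 - Real.exp (-mu)))) := by
  have hRu : 0 < R * u := by positivity
  rw [← hIR]
  rw [← lintegral_add_compl (fun s => ENNReal.ofReal (1 - Real.exp (-((R*u)⁻¹ * s)))) (measurableSet_Iic (a := u))]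
  rw [Set.compl_Iic]
  have hterm2 : ∫⁻ s in Set.Ioi u, ENNReal.ofReal (1 - Real.exp (-((R*u)⁻¹ * s))) ∂ν ≤ ν (Set.Ioi u) := by
    calc ∫⁻ s in Set.Ioi u, ENNReal.ofReal (1 - Real.exp (-((R*u)⁻¹ * s))) ∂ν
        ≤ ∫⁻ _ in Set.Ioi u, 1 ∂ν := by
          apply setLIntegral_mono measurable_const
          intro s _
          exact ENNReal.ofReal_le_one.mpr (by nlinarith [Real.exp_pos (-((R*u)⁻¹ * s))])
      _ = ν (Set.Ioi u) := by rw [setLIntegral_const, one_mul]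
  have hpt : ∀ s ∈ Set.Iic u, ENNReal.ofReal (1 - Real.exp (-((R*u)⁻¹ * s))) ≤
      ENNReal.ofReal ((R*u)⁻¹) * ENNReal.ofReal s := by
    intro s _
    rcases le_or_gt s 0 with h0 | h0
    · rw [ENNReal.ofReal_of_nonpos]
      · exact zero_le
      · have hs0 : (R*u)⁻¹ * s ≤ 0 := mul_nonpos_of_nonneg_of_nonpos (inv_pos.mpr hRu).le h0
        nlinarith [Real.one_le_exp (by linarith : (0:ℝ) ≤ -((R*u)⁻¹ * s))]
    · rw [← ENNReal.ofReal_mul (by positivity)]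
      exact ENNReal.ofReal_le_ofReal (one_sub_exp_le _)
  have hterm1 : ∫⁻ s in Set.Iic u, ENNReal.ofReal (1 - Real.exp (-((R*u)⁻¹ * s))) ∂ν ≤
      ENNReal.ofReal (R⁻¹ * ((1 - Real.exp (-1))⁻¹ * (1 - Real.exp (-mu)))) := by
    calc ∫⁻ s in Set.Iic u, ENNReal.ofReal (1 - Real.exp (-((R*u)⁻¹ * s))) ∂ν
        ≤ ∫⁻ s in Set.Iic u, ENNReal.ofReal ((R*u)⁻¹) * ENNReal.ofReal s ∂ν :=
          setLIntegral_mono (by fun_prop) hpt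
      _ = ENNReal.ofReal ((R*u)⁻¹) * ∫⁻ s in Set.Iic u, ENNReal.ofReal s ∂ν :=
          lintegral_const_mul' _ _ ENNReal.ofReal_ne_top
      _ ≤ ENNReal.ofReal ((R*u)⁻¹) * ENNReal.ofReal (u * (1 - Real.exp (-1))⁻¹ * (1 - Real.exp (-mu))) :=
          mul_le_mul_right hMean _
      _ = ENNReal.ofReal ((R*u)⁻¹ * (u * (1 - Real.exp (-1))⁻¹ * (1 - Real.exp (-mu)))) :=
          (ENNReal.ofReal_mul (by positivity)).symm
      _ = ENNReal.ofReal (R⁻¹ * ((1 - Real.exp (-1))⁻¹ * (1 - Real.exp (-mu)))) := by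
          congr 1
          rw [mul_inv]
          calc R⁻¹ * u⁻¹ * (u * (1 - Real.exp (-1))⁻¹ * (1 - Real.exp (-mu)))
              = (u⁻¹ * u) * (R⁻¹ * ((1 - Real.exp (-1))⁻¹ * (1 - Real.exp (-mu)))) := by ring
            _ = R⁻¹ * ((1 - Real.exp (-1))⁻¹ * (1 - Real.exp (-mu))) := by
                rw [inv_mul_cancel₀ hu.ne', one_mul]
  exact le_trans (add_le_add hterm1 hterm2) (le_of_eq (add_comm _ _))


theorem bern_mono {φ : ℝ → ℝ} (hφ : IsBernstein φ) : MonotoneOn φ (Set.Ici 0) := by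
  obtain ⟨hc, hd, hnn, hsgn⟩ := hφ
  apply monotoneOn_of_deriv_nonneg (convex_Ici 0) hc
  · rw [interior_Ici]
    intro x hx
    exact ((hd.contDiffAt (Ioi_mem_nhds hx)).differentiableAt (by simp)).differentiableWithinAt
  · rw [interior_Ici]
    intro x hx
    have h := hsgn 1 le_rfl x hx
    simpa [iteratedDeriv_one] using h


theorem scale_up {φ : ℝ → ℝ} {β₁ C₃ : ℝ} (hC₃ : 1 ≤ C₃)
    (hφlo : ∀ l : ℝ, 0 < l → l ≤ 1 → ∀ θ : ℝ, 0 < θ → φ (l * θ) ≤ C₃ * l ^ β₁ * φ θ)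
    {a θ : ℝ} (ha : 1 ≤ a) (hθ : 0 < θ) : C₃⁻¹ * a ^ β₁ * φ θ ≤ φ (a * θ) := by
  have ha0 : 0 < a := lt_of_lt_of_le one_pos ha
  have h := hφlo a⁻¹ (inv_pos.mpr ha0) (inv_le_one_of_one_le₀ ha) (a * θ) (by positivity)
  rw [inv_mul_cancel_left₀ ha0.ne'] at h
  have hrp : (a:ℝ) ^ β₁ * (a⁻¹) ^ β₁ = 1 := by
    rw [← Real.mul_rpow ha0.le (inv_nonneg.mpr ha0.le), mul_inv_cancel₀ ha0.ne', Real.one_rpow]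
  have hC₃0 : 0 < C₃ := lt_of_lt_of_le one_pos hC₃
  have hap : 0 < (a:ℝ) ^ β₁ := Real.rpow_pos_of_pos ha0 _
  have hainv : 0 < (a⁻¹:ℝ) ^ β₁ := Real.rpow_pos_of_pos (by positivity) _
  -- from h : φ θ ≤ C₃ * a⁻¹^β₁ * φ (a*θ)
  have := mul_le_mul_of_nonneg_left h (le_of_lt (by positivity : (0:ℝ) < C₃⁻¹ * a ^ β₁))
  calc C₃⁻¹ * a ^ β₁ * φ θ ≤ C₃⁻¹ * a ^ β₁ * (C₃ * a⁻¹ ^ β₁ * φ (a * θ)) := this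
    _ = (C₃⁻¹ * C₃) * (a ^ β₁ * a⁻¹ ^ β₁) * φ (a*θ) := by ring
    _ = φ (a * θ) := by rw [inv_mul_cancel₀ hC₃0.ne', hrp]; ring

theorem scale_up' {φ : ℝ → ℝ} {β₂ c₄ : ℝ} (hc₄0 : 0 < c₄)
    (hφup : ∀ l : ℝ, 0 < l → l ≤ 1 → ∀ θ : ℝ, 0 < θ → c₄ * l ^ β₂ * φ θ ≤ φ (l * θ))
    {a θ : ℝ} (ha : 1 ≤ a) (hθ : 0 < θ) : φ (a * θ) ≤ c₄⁻¹ * a ^ β₂ * φ θ := by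
  have ha0 : 0 < a := lt_of_lt_of_le one_pos ha
  have h := hφup a⁻¹ (inv_pos.mpr ha0) (inv_le_one_of_one_le₀ ha) (a * θ) (by positivity)
  rw [inv_mul_cancel_left₀ ha0.ne'] at h
  have hrp : (a:ℝ) ^ β₂ * (a⁻¹) ^ β₂ = 1 := by
    rw [← Real.mul_rpow ha0.le (inv_nonneg.mpr ha0.le), mul_inv_cancel₀ ha0.ne', Real.one_rpow]
  -- h : c₄ * a⁻¹^β₂ * φ (a*θ) ≤ φ θ
  have := mul_le_mul_of_nonneg_left h (le_of_lt (by positivity : (0:ℝ) < c₄⁻¹ * a ^ β₂))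
  calc φ (a*θ) = (c₄⁻¹ * c₄) * (a ^ β₂ * a⁻¹ ^ β₂) * φ (a*θ) := by
        rw [inv_mul_cancel₀ hc₄0.ne', hrp]; ring
    _ = c₄⁻¹ * a ^ β₂ * (c₄ * a⁻¹ ^ β₂ * φ (a * θ)) := by ring
    _ ≤ c₄⁻¹ * a ^ β₂ * φ θ := this


theorem lap_lint (ν : Measure ℝ) [IsProbabilityMeasure ν] (hsupp : ν (Set.Iio 0) = 0)
    (l m : ℝ) (hl : 0 ≤ l) (hlap : (∫ s, Real.exp (-l * s) ∂ν) = Real.exp (-m)) :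
    (∫⁻ s, ENNReal.ofReal (Real.exp (-(l * s))) ∂ν) = ENNReal.ofReal (Real.exp (-m)) ∧
    (∫⁻ s, ENNReal.ofReal (1 - Real.exp (-(l * s))) ∂ν) = ENNReal.ofReal (1 - Real.exp (-m)) := by
  have hae : ∀ᵐ s ∂ν, 0 ≤ s := by
    rw [ae_iff]
    convert hsupp using 2
    ext s; simp [Set.Iio, not_le]
  have hmeas : Continuous fun s : ℝ => Real.exp (-(l * s)) := by continuity
  have hint : Integrable (fun s : ℝ => Real.exp (-(l * s))) ν := by
    apply Integrable.mono' (integrable_const (1:ℝ)) hmeas.aestronglyMeasurable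
    filter_upwards [hae] with s hs
    rw [Real.norm_eq_abs, abs_of_pos (Real.exp_pos _)]
    exact Real.exp_le_one_iff.mpr (by nlinarith)
  have hlap' : (∫ s, Real.exp (-(l * s)) ∂ν) = Real.exp (-m) := by
    simpa [neg_mul] using hlap
  constructor
  · rw [← ofReal_integral_eq_lintegral_ofReal hint
      (Filter.Eventually.of_forall fun s => (Real.exp_pos _).le), hlap']
  · have hint2 : Integrable (fun s : ℝ => 1 - Real.exp (-(l * s))) ν :=
      (integrable_const (1:ℝ)).sub hint
    rw [← ofReal_integral_eq_lintegral_ofReal hint2 ?_]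
    · congr 1
      rw [integral_sub (integrable_const _) hint, hlap', integral_const]
      simp
    · filter_upwards [hae] with s hs
      have : Real.exp (-(l * s)) ≤ 1 := Real.exp_le_one_iff.mpr (by nlinarith)
      simp only [Pi.zero_apply]; linarith


theorem genInv_spec {φ : ℝ → ℝ} (hmono : MonotoneOn φ (Set.Ici 0))
    (hcont : ContinuousOn φ (Set.Ici 0)) (hφ0 : φ 0 = 0)
    (hunb : ∀ y : ℝ, ∃ θ, 0 < θ ∧ y ≤ φ θ)
    (u : ℝ) (hu : 0 < u) : 0 < genInv φ u ∧ φ (genInv φ u) = u := by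
  show 0 < sInf {θ : ℝ | 0 < θ ∧ u ≤ φ θ} ∧ φ (sInf {θ : ℝ | 0 < θ ∧ u ≤ φ θ}) = u
  set S := {θ : ℝ | 0 < θ ∧ u ≤ φ θ} with hS
  have hSne : S.Nonempty := by
    obtain ⟨θ, hθ, hy⟩ := hunb u
    exact ⟨θ, hθ, hy⟩
  have hbdd : BddBelow S := ⟨0, fun θ hθ => hθ.1.le⟩
  set T := sInf S with hT
  have hsmall : ∃ δ, 0 < δ ∧ ∀ θ, 0 ≤ θ → θ ≤ δ → φ θ < u := by
    have h0 : ContinuousWithinAt φ (Set.Ici 0) 0 := hcont 0 Set.self_mem_Ici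
    have hmem := h0 (show Set.Iio u ∈ nhds (φ 0) by rw [hφ0]; exact Iio_mem_nhds hu)
    rw [Filter.mem_map, Metric.mem_nhdsWithin_iff] at hmem
    obtain ⟨ε, hε, hsub⟩ := hmem
    refine ⟨ε/2, by positivity, fun θ h0θ hθδ => ?_⟩
    have hmm : θ ∈ Metric.ball (0:ℝ) ε ∩ Set.Ici 0 := by
      refine ⟨?_, h0θ⟩
      rw [Metric.mem_ball, Real.dist_eq, sub_zero, abs_of_nonneg h0θ]
      linarith
    exact hsub hmm
  obtain ⟨δ, hδ0, hδ⟩ := hsmall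
  have hTδ : δ ≤ T := by
    apply le_csInf hSne
    intro θ hθ
    by_contra hlt
    push_neg at hlt
    exact absurd hθ.2 (not_le.mpr (hδ θ hθ.1.le hlt.le))
  have hT0 : 0 < T := lt_of_lt_of_le hδ0 hTδ
  have hTcont : ContinuousWithinAt φ (Set.Ici 0) T := hcont T hT0.le
  refine ⟨hT0, ?_⟩
  by_contra hne
  rcases lt_or_gt_of_ne hne with hlt | hgt
  · have hmem := hTcont (show Set.Iio u ∈ nhds (φ T) from Iio_mem_nhds hlt)
    rw [Filter.mem_map, Metric.mem_nhdsWithin_iff] at hmem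
    obtain ⟨ε, hε, hsub⟩ := hmem
    have hx : φ (T + ε/2) < u := by
      have hmm : T + ε/2 ∈ Metric.ball T ε ∩ Set.Ici 0 := by
        refine ⟨?_, by simp only [Set.mem_Ici]; linarith⟩
        rw [Metric.mem_ball, Real.dist_eq]
        rw [show T + ε/2 - T = ε/2 by ring, abs_of_nonneg (by linarith)]
        linarith
      exact hsub hmm
    have hlb : ∀ θ ∈ S, T + ε/2 ≤ θ := by
      intro θ hθ
      by_contra hc
      push_neg at hc
      have : φ θ ≤ φ (T + ε/2) := hmono hθ.1.le (by linarith : (0:ℝ) ≤ T + ε/2) hc.le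
      exact absurd hθ.2 (not_le.mpr (lt_of_le_of_lt this hx))
    have := le_csInf hSne hlb
    rw [← hT] at this
    linarith
  · have hmem := hTcont (show Set.Ioi u ∈ nhds (φ T) from Ioi_mem_nhds hgt)
    rw [Filter.mem_map, Metric.mem_nhdsWithin_iff] at hmem
    obtain ⟨ε, hε, hsub⟩ := hmem
    set θ := max (T - ε/2) (T/2) with hθdef
    have hθT : θ < T := by apply max_lt <;> linarith
    have hθ0 : 0 < θ := lt_of_lt_of_le (by linarith) (le_max_right _ _)
    have hθball : θ ∈ Metric.ball T ε ∩ Set.Ici 0 := by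
      constructor
      · rw [Metric.mem_ball, Real.dist_eq, abs_of_nonpos (by linarith [hθT.le])]
        have : T - ε/2 ≤ θ := le_max_left _ _
        linarith
      · exact hθ0.le
    have hθS : θ ∈ S := ⟨hθ0, (hsub hθball).le⟩
    have := csInf_le hbdd hθS
    linarith


theorem dyadic_cover {s₀ : ℝ} (hs₀ : 0 < s₀) :
    Set.Ioc 0 s₀ ⊆ ⋃ n : ℕ, Set.Ioc (s₀ / 2^(n+1)) (s₀ / 2^n) := by
  intro s hs
  obtain ⟨hs0, hss₀⟩ := hs
  have hex : ∃ k : ℕ, s₀ < 2^(k+1) * s := by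
    obtain ⟨k, hk⟩ := pow_unbounded_of_one_lt (s₀ / s) (by norm_num : (1:ℝ) < 2)
    exact ⟨k, by rw [div_lt_iff₀ hs0] at hk; calc s₀ < 2^k * s := by linarith
                 _ ≤ 2^(k+1) * s := by have : (2:ℝ)^k ≤ 2^(k+1) := by
                                         apply pow_le_pow_right₀ (by norm_num) (by omega)
                                       nlinarith⟩
  classical
  let n := Nat.find hex
  have hn : s₀ < 2^(n+1) * s := Nat.find_spec hex
  have hub : s ≤ s₀ / 2^n := by
    rcases Nat.eq_zero_or_pos n with h0 | hpos
    · rw [h0]; simpa using hss₀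
    · obtain ⟨m, hm⟩ := Nat.exists_eq_succ_of_ne_zero hpos.ne'
      have hnot := Nat.find_min hex (m := m) (by omega)
      push_neg at hnot
      rw [le_div_iff₀ (by positivity)]
      rw [hm]
      calc s * 2^(m+1) = 2^(m+1) * s := by ring
        _ ≤ s₀ := hnot
  refine Set.mem_iUnion.mpr ⟨n, ?_, hub⟩
  rw [div_lt_iff₀ (by positivity)]
  linarith [hn]


theorem pow_rpow_nat (b : ℝ) (n : ℕ) : ((2:ℝ)^n) ^ b = ((2:ℝ)^b)^n := by
  rw [← Real.rpow_natCast 2 n, ← Real.rpow_mul (by norm_num), mul_comm,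
    Real.rpow_mul (by norm_num), Real.rpow_natCast]

theorem summable_dyadic (e B b : ℝ) (he : 0 ≤ e) (hB : 0 < B) (hb : 0 < b) :
    Summable (fun n : ℕ => ((2:ℝ)^(n+1)) ^ e * Real.exp (-(B * ((2:ℝ)^n) ^ b))) := by
  have h2b : (1:ℝ) < (2:ℝ)^b := by
    rw [show (1:ℝ) = (2:ℝ)^(0:ℝ) by simp]
    exact Real.rpow_lt_rpow_left_iff (by norm_num) |>.mpr hb
  apply summable_of_ratio_norm_eventually_le (r := 1/2) (by norm_num)
  have h1 : Filter.Tendsto (fun n : ℕ => ((2:ℝ)^n) ^ b) Filter.atTop Filter.atTop := by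
    simp_rw [pow_rpow_nat]
    exact tendsto_pow_atTop_atTop_of_one_lt h2b
  have hq : Filter.Tendsto (fun n : ℕ => (2:ℝ)^e * Real.exp (-(B * ((2:ℝ)^b - 1) * ((2:ℝ)^n) ^ b)))
      Filter.atTop (nhds 0) := by
    rw [show (0:ℝ) = (2:ℝ)^e * 0 by ring]
    apply Filter.Tendsto.const_mul
    apply Real.tendsto_exp_atBot.comp
    apply Filter.tendsto_neg_atBot_iff.mpr
    apply Filter.Tendsto.const_mul_atTop (by nlinarith : (0:ℝ) < B * ((2:ℝ)^b - 1)) h1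
  have hev : ∀ᶠ n : ℕ in Filter.atTop,
      (2:ℝ)^e * Real.exp (-(B * ((2:ℝ)^b - 1) * ((2:ℝ)^n) ^ b)) ≤ 1/2 := by
    exact hq.eventually_le_const (show (0:ℝ) < 1/2 by norm_num)
  filter_upwards [hev] with n hn
  have hpos_a : 0 < ((2:ℝ)^(n+1)) ^ e * Real.exp (-(B * ((2:ℝ)^n) ^ b)) := by positivity
  have key : ((2:ℝ)^(n+1+1)) ^ e * Real.exp (-(B * ((2:ℝ)^(n+1)) ^ b)) =
      ((2:ℝ)^e * Real.exp (-(B * ((2:ℝ)^b - 1) * ((2:ℝ)^n) ^ b))) *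
        (((2:ℝ)^(n+1)) ^ e * Real.exp (-(B * ((2:ℝ)^n) ^ b))) := by
    have e1 : ((2:ℝ)^(n+1+1)) ^ e = (2:ℝ)^e * ((2:ℝ)^(n+1)) ^ e := by
      rw [show (2:ℝ)^(n+1+1) = 2 * (2:ℝ)^(n+1) by ring, Real.mul_rpow (by norm_num) (by positivity)]
    have e2 : ((2:ℝ)^(n+1)) ^ b = ((2:ℝ)^n) ^ b * (2:ℝ)^b := by
      rw [show (2:ℝ)^(n+1) = (2:ℝ)^n * 2 by ring, Real.mul_rpow (by positivity) (by norm_num)]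
    rw [e1, e2]
    rw [show -(B * (((2:ℝ)^n) ^ b * (2:ℝ)^b)) =
      -(B * ((2:ℝ)^b - 1) * ((2:ℝ)^n) ^ b) + -(B * ((2:ℝ)^n) ^ b) by ring, Real.exp_add]
    ring
  rw [Real.norm_eq_abs, Real.norm_eq_abs, abs_of_pos hpos_a, abs_of_pos (by positivity), key]
  exact mul_le_mul_of_nonneg_right hn (le_of_lt (by positivity))


def Sconst (e B b : ℝ) : ℝ := ∑' n : ℕ, ((2:ℝ)^(n+1)) ^ e * Real.exp (-(B * ((2:ℝ)^n) ^ b))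


theorem Sconst_nonneg (e B b : ℝ) : 0 ≤ Sconst e B b :=
  tsum_nonneg (fun n => by positivity)

theorem ub_diag (ν : Measure ℝ) [IsProbabilityMeasure ν]
    (W : ℝ → ℝ) (hWpos : ∀ r, 0 < r → 0 < W r) (hWmono : Monotone W)
    (C₁ C₂ C₃ γ₂ α β₁ : ℝ) (hC₁ : 1 ≤ C₁) (hC₂ : 0 ≤ C₂) (hC₃ : 1 ≤ C₃)
    (hα : 0 < α) (hβ₁ : 0 < β₁) (hγ₂ : 0 < γ₂)
    (hWd : ∀ l r, 1 ≤ l → 0 < r → W (l * r) ≤ C₁ * l ^ γ₂ * W r)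
    (s₀ : ℝ) (hs₀ : 0 < s₀)
    (g : ℝ → ℝ≥0∞)
    (hg : ∀ s, 0 < s → g s ≤ ENNReal.ofReal (C₂ * (1 / W (s ^ (1/α)))))
    (htail : ∀ n : ℕ, ν (Set.Iic (s₀/2^n)) ≤
      ENNReal.ofReal (Real.exp 1 * Real.exp (-(C₃⁻¹ * ((2:ℝ)^n) ^ β₁)))) :
    ∫⁻ s in Set.Ioi 0, g s ∂ν ≤
      ENNReal.ofReal (C₂ * (C₁ * Real.exp 1 * Sconst ((1/α)*γ₂) C₃⁻¹ β₁ + 1) * (1 / W (s₀ ^ (1/α)))) := by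
  have hWs₀ : 0 < W (s₀ ^ (1/α)) := hWpos _ (Real.rpow_pos_of_pos hs₀ _)
  have hsplit : Set.Ioi (0:ℝ) = Set.Ioc 0 s₀ ∪ Set.Ioi s₀ := (Set.Ioc_union_Ioi_eq_Ioi hs₀.le).symm
  rw [hsplit, lintegral_union measurableSet_Ioi Set.Ioc_disjoint_Ioi_same]
  -- piece over Ioi s₀
  have h2 : ∫⁻ s in Set.Ioi s₀, g s ∂ν ≤ ENNReal.ofReal (C₂ * (1 / W (s₀ ^ (1/α)))) := by
    calc ∫⁻ s in Set.Ioi s₀, g s ∂ν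
        ≤ ∫⁻ _ in Set.Ioi s₀, ENNReal.ofReal (C₂ * (1 / W (s₀ ^ (1/α)))) ∂ν := by
          apply setLIntegral_mono measurable_const
          intro s hs
          rw [Set.mem_Ioi] at hs
          have hs0 : 0 < s := lt_trans hs₀ hs
          refine (hg s hs0).trans (ENNReal.ofReal_le_ofReal ?_)
          have hr : s₀ ^ (1/α) ≤ s ^ (1/α) :=
            Real.rpow_le_rpow hs₀.le hs.le (by positivity)
          have hWle : W (s₀ ^ (1/α)) ≤ W (s ^ (1/α)) := hWmono hr
          have hWs : 0 < W (s ^ (1/α)) := lt_of_lt_of_le hWs₀ hWle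
          apply mul_le_mul_of_nonneg_left _ hC₂
          exact one_div_le_one_div_of_le hWs₀ hWle
      _ = ENNReal.ofReal (C₂ * (1 / W (s₀ ^ (1/α)))) * ν (Set.Ioi s₀) := setLIntegral_const _ _
      _ ≤ ENNReal.ofReal (C₂ * (1 / W (s₀ ^ (1/α)))) * 1 := mul_le_mul_right prob_le_one _
      _ = ENNReal.ofReal (C₂ * (1 / W (s₀ ^ (1/α)))) := mul_one _
  -- piece over Ioc 0 s₀
  have h1 : ∫⁻ s in Set.Ioc (0:ℝ) s₀, g s ∂ν ≤
      ENNReal.ofReal (C₂ * C₁ * Real.exp 1 * Sconst ((1/α)*γ₂) C₃⁻¹ β₁ * (1 / W (s₀ ^ (1/α)))) := by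
    have hsub := dyadic_cover hs₀
    have hsum : Summable (fun n : ℕ => ((2:ℝ)^(n+1)) ^ ((1/α)*γ₂) * Real.exp (-(C₃⁻¹ * ((2:ℝ)^n) ^ β₁))) :=
      summable_dyadic _ _ _ (by positivity) (by positivity) hβ₁
    calc ∫⁻ s in Set.Ioc (0:ℝ) s₀, g s ∂ν
        ≤ ∫⁻ s in ⋃ n : ℕ, Set.Ioc (s₀ / 2^(n+1)) (s₀ / 2^n), g s ∂ν := lintegral_mono_set hsub
      _ ≤ ∑' n : ℕ, ∫⁻ s in Set.Ioc (s₀ / 2^(n+1)) (s₀ / 2^n), g s ∂ν := lintegral_iUnion_le _ _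
      _ ≤ ∑' n : ℕ, ENNReal.ofReal ((C₂ * C₁ * Real.exp 1 * (1 / W (s₀ ^ (1/α)))) *
            (((2:ℝ)^(n+1)) ^ ((1/α)*γ₂) * Real.exp (-(C₃⁻¹ * ((2:ℝ)^n) ^ β₁)))) := by
          apply ENNReal.tsum_le_tsum
          intro n
          have h2n1 : (0:ℝ) < 2^(n+1) := by positivity
          have hrn : 0 < s₀ / 2^(n+1) := by positivity
          -- pointwise constant bound on the dyadic piece
          have hptw : ∀ s ∈ Set.Ioc (s₀ / 2^(n+1)) (s₀ / 2^n), g s ≤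
              ENNReal.ofReal (C₂ * (C₁ * ((2:ℝ)^(n+1)) ^ ((1/α)*γ₂) * (1 / W (s₀ ^ (1/α))))) := by
            intro s hs
            have hs0 : 0 < s := lt_trans hrn hs.1
            refine (hg s hs0).trans (ENNReal.ofReal_le_ofReal ?_)
            apply mul_le_mul_of_nonneg_left _ hC₂
            have hWl : 0 < W ((s₀ / 2^(n+1)) ^ (1/α)) := hWpos _ (Real.rpow_pos_of_pos hrn _)
            have hWls : W ((s₀ / 2^(n+1)) ^ (1/α)) ≤ W (s ^ (1/α)) :=
              hWmono (Real.rpow_le_rpow hrn.le hs.1.le (by positivity))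
            have hkey : W (s₀ ^ (1/α)) ≤ C₁ * ((2:ℝ)^(n+1)) ^ ((1/α)*γ₂) * W ((s₀ / 2^(n+1)) ^ (1/α)) := by
              have hl1 : (1:ℝ) ≤ ((2:ℝ)^(n+1)) ^ (1/α) :=
                Real.one_le_rpow (one_le_pow₀ (by norm_num)) (by positivity)
              have hid : s₀ ^ (1/α) = ((2:ℝ)^(n+1)) ^ (1/α) * (s₀ / 2^(n+1)) ^ (1/α) := by
                rw [← Real.mul_rpow (by positivity) hrn.le]
                congr 1
                field_simp
              have := hWd (((2:ℝ)^(n+1)) ^ (1/α)) ((s₀ / 2^(n+1)) ^ (1/α)) hl1 (Real.rpow_pos_of_pos hrn _)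
              rw [← hid] at this
              refine this.trans (le_of_eq ?_)
              congr 2
              exact (Real.rpow_mul (by positivity) _ _).symm
            calc (1 : ℝ) / W (s ^ (1/α)) ≤ 1 / W ((s₀ / 2^(n+1)) ^ (1/α)) :=
                  one_div_le_one_div_of_le hWl hWls
              _ ≤ C₁ * ((2:ℝ)^(n+1)) ^ ((1/α)*γ₂) * (1 / W (s₀ ^ (1/α))) := by
                  rw [mul_one_div]
                  rw [div_le_div_iff₀ hWl hWs₀]
                  calc 1 * W (s₀ ^ (1/α)) = W (s₀ ^ (1/α)) := one_mul _
                    _ ≤ C₁ * ((2:ℝ)^(n+1)) ^ ((1/α)*γ₂) * W ((s₀ / 2^(n+1)) ^ (1/α)) := hkey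
          calc ∫⁻ s in Set.Ioc (s₀ / 2^(n+1)) (s₀ / 2^n), g s ∂ν
              ≤ ∫⁻ _ in Set.Ioc (s₀ / 2^(n+1)) (s₀ / 2^n),
                  ENNReal.ofReal (C₂ * (C₁ * ((2:ℝ)^(n+1)) ^ ((1/α)*γ₂) * (1 / W (s₀ ^ (1/α))))) ∂ν :=
                setLIntegral_mono measurable_const hptw
            _ = ENNReal.ofReal (C₂ * (C₁ * ((2:ℝ)^(n+1)) ^ ((1/α)*γ₂) * (1 / W (s₀ ^ (1/α))))) *
                  ν (Set.Ioc (s₀ / 2^(n+1)) (s₀ / 2^n)) := setLIntegral_const _ _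
            _ ≤ ENNReal.ofReal (C₂ * (C₁ * ((2:ℝ)^(n+1)) ^ ((1/α)*γ₂) * (1 / W (s₀ ^ (1/α))))) *
                  ν (Set.Iic (s₀ / 2^n)) := by
                gcongr
                exact fun s hs => hs.2
            _ ≤ ENNReal.ofReal (C₂ * (C₁ * ((2:ℝ)^(n+1)) ^ ((1/α)*γ₂) * (1 / W (s₀ ^ (1/α))))) *
                  ENNReal.ofReal (Real.exp 1 * Real.exp (-(C₃⁻¹ * ((2:ℝ)^n) ^ β₁))) :=
                mul_le_mul_right (htail n) _
            _ = ENNReal.ofReal ((C₂ * (C₁ * ((2:ℝ)^(n+1)) ^ ((1/α)*γ₂) * (1 / W (s₀ ^ (1/α))))) *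
                  (Real.exp 1 * Real.exp (-(C₃⁻¹ * ((2:ℝ)^n) ^ β₁)))) :=
                (ENNReal.ofReal_mul (by positivity)).symm
            _ = ENNReal.ofReal ((C₂ * C₁ * Real.exp 1 * (1 / W (s₀ ^ (1/α)))) *
                  (((2:ℝ)^(n+1)) ^ ((1/α)*γ₂) * Real.exp (-(C₃⁻¹ * ((2:ℝ)^n) ^ β₁)))) := by
                congr 1; ring
      _ = ENNReal.ofReal ((C₂ * C₁ * Real.exp 1 * (1 / W (s₀ ^ (1/α)))) *
            Sconst ((1/α)*γ₂) C₃⁻¹ β₁) := by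
          rw [← ENNReal.ofReal_tsum_of_nonneg (fun n => by positivity) (hsum.mul_left _)]
          congr 1
          rw [Sconst, tsum_mul_left]
      _ = ENNReal.ofReal (C₂ * C₁ * Real.exp 1 * Sconst ((1/α)*γ₂) C₃⁻¹ β₁ * (1 / W (s₀ ^ (1/α)))) := by
          congr 1; ring
  calc (∫⁻ s in Set.Ioc (0:ℝ) s₀, g s ∂ν) + ∫⁻ s in Set.Ioi s₀, g s ∂ν
      ≤ ENNReal.ofReal (C₂ * C₁ * Real.exp 1 * Sconst ((1/α)*γ₂) C₃⁻¹ β₁ * (1 / W (s₀ ^ (1/α)))) +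
        ENNReal.ofReal (C₂ * (1 / W (s₀ ^ (1/α)))) := add_le_add h1 h2
    _ = ENNReal.ofReal (C₂ * (C₁ * Real.exp 1 * Sconst ((1/α)*γ₂) C₃⁻¹ β₁ + 1) * (1 / W (s₀ ^ (1/α)))) := by
        have hS := Sconst_nonneg ((1/α)*γ₂) C₃⁻¹ β₁
        have hWnn : 0 ≤ 1 / W (s₀ ^ (1/α)) := by positivity
        rw [← ENNReal.ofReal_add
          (mul_nonneg (mul_nonneg (mul_nonneg (mul_nonneg hC₂ (by linarith)) (Real.exp_pos 1).le) hS) hWnn)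
          (mul_nonneg hC₂ hWnn)]
        congr 1
        ring


theorem ub_off (ν : Measure ℝ) [IsProbabilityMeasure ν] (u w A : ℝ) (hu : 0 < u) (hw : 0 ≤ w)
    (hA : 0 ≤ A) (g : ℝ → ℝ≥0∞)
    (hg1 : ∀ s ∈ Set.Ioc (0:ℝ) u, g s ≤ ENNReal.ofReal (A * u⁻¹ * s))
    (hg2 : ∀ s ∈ Set.Ioi u, g s ≤ ENNReal.ofReal A)
    (hmean : ∫⁻ s in Set.Iic u, ENNReal.ofReal s ∂ν ≤
      ENNReal.ofReal (u * (1 - Real.exp (-1))⁻¹ * (1 - Real.exp (-w))))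
    (htail : ν (Set.Ioi u) ≤ ENNReal.ofReal ((1 - Real.exp (-1))⁻¹ * (1 - Real.exp (-w)))) :
    ∫⁻ s in Set.Ioi 0, g s ∂ν ≤
      ENNReal.ofReal (A * ((1 - Real.exp (-1))⁻¹ + (1 - Real.exp (-1))⁻¹) * w) := by
  have hD : 0 < (1 - Real.exp (-1))⁻¹ := inv_pos.mpr E1pos
  have hsplit : Set.Ioi (0:ℝ) = Set.Ioc 0 u ∪ Set.Ioi u := (Set.Ioc_union_Ioi_eq_Ioi hu.le).symm
  rw [hsplit, lintegral_union measurableSet_Ioi Set.Ioc_disjoint_Ioi_same]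
  have h1 : ∫⁻ s in Set.Ioc (0:ℝ) u, g s ∂ν ≤
      ENNReal.ofReal (A * (1 - Real.exp (-1))⁻¹ * w) := by
    calc ∫⁻ s in Set.Ioc (0:ℝ) u, g s ∂ν
        ≤ ∫⁻ s in Set.Ioc (0:ℝ) u, ENNReal.ofReal (A * u⁻¹) * ENNReal.ofReal s ∂ν := by
          apply setLIntegral_mono (by fun_prop)
          intro s hs
          refine (hg1 s hs).trans (le_of_eq ?_)
          rw [← ENNReal.ofReal_mul (by positivity)]
      _ = ENNReal.ofReal (A * u⁻¹) * ∫⁻ s in Set.Ioc (0:ℝ) u, ENNReal.ofReal s ∂ν :=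
          lintegral_const_mul' _ _ ENNReal.ofReal_ne_top
      _ ≤ ENNReal.ofReal (A * u⁻¹) * ∫⁻ s in Set.Iic u, ENNReal.ofReal s ∂ν := by
          gcongr
          exact fun s hs => hs.2
      _ ≤ ENNReal.ofReal (A * u⁻¹) * ENNReal.ofReal (u * (1 - Real.exp (-1))⁻¹ * (1 - Real.exp (-w))) :=
          mul_le_mul_right hmean _
      _ = ENNReal.ofReal (A * u⁻¹ * (u * (1 - Real.exp (-1))⁻¹ * (1 - Real.exp (-w)))) :=
          (ENNReal.ofReal_mul (by positivity)).symm
      _ ≤ ENNReal.ofReal (A * (1 - Real.exp (-1))⁻¹ * w) := by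
          apply ENNReal.ofReal_le_ofReal
          have he : A * u⁻¹ * (u * (1 - Real.exp (-1))⁻¹ * (1 - Real.exp (-w))) =
              A * (1 - Real.exp (-1))⁻¹ * (1 - Real.exp (-w)) * (u⁻¹ * u) := by ring
          rw [he, inv_mul_cancel₀ hu.ne', mul_one]
          have := one_sub_exp_le w
          nlinarith [mul_nonneg hA hD.le]
  have h2 : ∫⁻ s in Set.Ioi u, g s ∂ν ≤ ENNReal.ofReal (A * (1 - Real.exp (-1))⁻¹ * w) := by
    calc ∫⁻ s in Set.Ioi u, g s ∂ν ≤ ∫⁻ _ in Set.Ioi u, ENNReal.ofReal A ∂ν :=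
          setLIntegral_mono measurable_const hg2
      _ = ENNReal.ofReal A * ν (Set.Ioi u) := by rw [setLIntegral_const]
      _ ≤ ENNReal.ofReal A * ENNReal.ofReal ((1 - Real.exp (-1))⁻¹ * (1 - Real.exp (-w))) :=
          mul_le_mul_right htail _
      _ = ENNReal.ofReal (A * ((1 - Real.exp (-1))⁻¹ * (1 - Real.exp (-w)))) :=
          (ENNReal.ofReal_mul hA).symm
      _ ≤ ENNReal.ofReal (A * (1 - Real.exp (-1))⁻¹ * w) := by
          apply ENNReal.ofReal_le_ofReal
          have := one_sub_exp_le w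
          nlinarith [mul_nonneg hA hD.le]
  calc (∫⁻ s in Set.Ioc (0:ℝ) u, g s ∂ν) + ∫⁻ s in Set.Ioi u, g s ∂ν
      ≤ ENNReal.ofReal (A * (1 - Real.exp (-1))⁻¹ * w) + ENNReal.ofReal (A * (1 - Real.exp (-1))⁻¹ * w) :=
        add_le_add h1 h2
    _ = ENNReal.ofReal (A * ((1 - Real.exp (-1))⁻¹ + (1 - Real.exp (-1))⁻¹) * w) := by
        rw [← ENNReal.ofReal_add (by positivity) (by positivity)]
        ring_nf


theorem pow_rpow_nat' (x b : ℝ) (hx : 0 ≤ x) (n : ℕ) : (x^n) ^ b = (x^b)^n := by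
  rw [← Real.rpow_natCast x n, ← Real.rpow_mul hx, mul_comm, Real.rpow_mul hx, Real.rpow_natCast]

theorem vol_point_zero {M : Type*} [MetricSpace M] [MeasurableSpace M] [BorelSpace M]
    (μM : Measure M) (hVfin : ∀ (x : M) (r : ℝ), μM (Metric.closedBall x r) ≠ ⊤)
    (C₁ γ₁ : ℝ) (hC₁ : 1 ≤ C₁) (hγ₁ : 0 < γ₁)
    (hVdoub : ∀ (x : M) (l r : ℝ), 1 < l → 0 < r →
      C₁⁻¹ * l ^ γ₁ * (μM (Metric.closedBall x r)).toReal ≤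
        (μM (Metric.closedBall x (l * r))).toReal)
    (x : M) : (μM {x}).toReal = 0 := by
  have hC₁0 : 0 < C₁ := lt_of_lt_of_le one_pos hC₁
  have hbd : ∀ n : ℕ, (μM {x}).toReal ≤
      C₁ * ((1/2:ℝ) ^ γ₁)^(n+1) * (μM (Metric.closedBall x 1)).toReal := by
    intro n
    set r : ℝ := (1/2:ℝ)^(n+1) with hr
    have hr0 : 0 < r := by positivity
    have hr1 : r < 1 := pow_lt_one₀ (by norm_num) (by norm_num) (by omega)
    have hl : 1 < r⁻¹ := (one_lt_inv₀ hr0).mpr hr1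
    have hd := hVdoub x r⁻¹ r hl hr0
    rw [inv_mul_cancel₀ hr0.ne'] at hd
    have hrp : 0 < r ^ γ₁ := Real.rpow_pos_of_pos hr0 _
    rw [Real.inv_rpow hr0.le] at hd
    have hmem : (μM {x}).toReal ≤ (μM (Metric.closedBall x r)).toReal := by
      apply ENNReal.toReal_mono (hVfin x r)
      apply measure_mono
      intro y hy
      rw [Set.mem_singleton_iff] at hy
      subst hy
      exact Metric.mem_closedBall_self hr0.le
    have h2 := mul_le_mul_of_nonneg_left hd (by positivity : (0:ℝ) ≤ C₁ * r ^ γ₁)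
    have h3 : (C₁ * r ^ γ₁) * (C₁⁻¹ * (r ^ γ₁)⁻¹ * (μM (Metric.closedBall x r)).toReal) =
        (C₁ * C₁⁻¹) * ((r ^ γ₁) * (r ^ γ₁)⁻¹) * (μM (Metric.closedBall x r)).toReal := by ring
    rw [h3, mul_inv_cancel₀ hC₁0.ne', mul_inv_cancel₀ hrp.ne', one_mul, one_mul] at h2
    calc (μM {x}).toReal ≤ (μM (Metric.closedBall x r)).toReal := hmem
      _ ≤ C₁ * r ^ γ₁ * (μM (Metric.closedBall x 1)).toReal := h2
      _ = C₁ * ((1/2:ℝ) ^ γ₁)^(n+1) * (μM (Metric.closedBall x 1)).toReal := by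
          rw [hr, pow_rpow_nat' _ _ (by norm_num)]
  have hq0 : (0:ℝ) ≤ (1/2:ℝ) ^ γ₁ := (Real.rpow_pos_of_pos (by norm_num) _).le
  have hq1 : (1/2:ℝ) ^ γ₁ < 1 := Real.rpow_lt_one (by norm_num) (by norm_num) hγ₁
  have hlim : Filter.Tendsto
      (fun n : ℕ => C₁ * ((1/2:ℝ) ^ γ₁)^(n+1) * (μM (Metric.closedBall x 1)).toReal)
      Filter.atTop (nhds 0) := by
    have h1 : Filter.Tendsto (fun n : ℕ => ((1/2:ℝ) ^ γ₁)^(n+1)) Filter.atTop (nhds 0) :=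
      (tendsto_pow_atTop_nhds_zero_of_lt_one hq0 hq1).comp (Filter.tendsto_add_atTop_nat 1)
    have := (h1.const_mul C₁).mul_const ((μM (Metric.closedBall x 1)).toReal)
    simpa using this
  have hle : (μM {x}).toReal ≤ 0 := ge_of_tendsto' hlim hbd
  exact le_antisymm hle ENNReal.toReal_nonneg

theorem le_rpow_of_rpow_inv_le {X Y e : ℝ} (hX : 0 ≤ X) (he : 0 < e) (h : X ^ (1/e) ≤ Y) :
    X ≤ Y ^ e := by
  calc X = (X ^ (1/e)) ^ e := by
        rw [← Real.rpow_mul hX, one_div, inv_mul_cancel₀ he.ne', Real.rpow_one]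
    _ ≤ Y ^ e := Real.rpow_le_rpow (Real.rpow_nonneg hX _) h he.le

set_option maxHeartbeats 4000000 in
theorem subordinated_stable_like_two_sided_estimate
    {M : Type*} [MetricSpace M] [MeasurableSpace M] [BorelSpace M]
    (μM : Measure M)
    (hVfin : ∀ (x : M) (r : ℝ), μM (Metric.closedBall x r) ≠ ⊤)
    (hVpos : ∀ (x : M) (r : ℝ), 0 < r → 0 < (μM (Metric.closedBall x r)).toReal)
    (C₁ γ₁ γ₂ : ℝ) (hC₁ : 1 ≤ C₁) (hγ₁ : 0 < γ₁) (hγ₁₂ : γ₁ ≤ γ₂)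
    (hVdoub : ∀ (x : M) (l r : ℝ), 1 < l → 0 < r →
      C₁⁻¹ * l ^ γ₁ * (μM (Metric.closedBall x r)).toReal ≤
          (μM (Metric.closedBall x (l * r))).toReal ∧
        (μM (Metric.closedBall x (l * r))).toReal ≤
          C₁ * l ^ γ₂ * (μM (Metric.closedBall x r)).toReal)
    (C₂ α : ℝ) (hC₂ : 1 ≤ C₂) (hα : 0 < α)
    (p : ℝ → M → M → ℝ)
    (hpmeas : Measurable fun q : ℝ × M × M => p q.1 q.2.1 q.2.2)
    (hp : ∀ (s : ℝ), 0 < s → ∀ x y : M,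
      C₂⁻¹ * (if dist x y ^ α ≤ s then (1 : ℝ) else 0) /
          (μM (Metric.closedBall x (s ^ (1 / α)))).toReal ≤ p s x y ∧
        p s x y ≤ C₂ *
          (if x = y then 1 / (μM (Metric.closedBall x (s ^ (1 / α)))).toReal
            else min (1 / (μM (Metric.closedBall x (s ^ (1 / α)))).toReal)
              (s / ((μM (Metric.closedBall x (dist x y))).toReal * dist x y ^ α))))
    (φ : ℝ → ℝ) (hφ : IsBernstein φ) (hφ0 : φ 0 = 0)
    (β₁ β₂ c₄ C₃ : ℝ) (hβ₁ : 0 < β₁) (hβ₁₂ : β₁ ≤ β₂) (hβ₂ : β₂ < 1)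
    (hc₄0 : 0 < c₄) (hc₄1 : c₄ ≤ 1) (hC₃ : 1 ≤ C₃)
    (hφup : ∀ l : ℝ, 0 < l → l ≤ 1 → ∀ θ : ℝ, 0 < θ → c₄ * l ^ β₂ * φ θ ≤ φ (l * θ))
    (hφlo : ∀ l : ℝ, 0 < l → l ≤ 1 → ∀ θ : ℝ, 0 < θ → φ (l * θ) ≤ C₃ * l ^ β₁ * φ θ)
    (μ : ℝ → Measure ℝ) (hμ : IsSubordinatorLaw φ μ) :
    ∃ c C : ℝ, 0 < c ∧ c ≤ C ∧
      ∀ t : ℝ, 0 < t → ∀ x y : M,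
        ENNReal.ofReal (c *
            (if x = y then
              1 / (μM (Metric.closedBall x (genInv φ (1 / t) ^ (-(1 / α))))).toReal
            else
              min (1 / (μM (Metric.closedBall x (genInv φ (1 / t) ^ (-(1 / α))))).toReal)
                (t * φ (dist x y ^ (-α)) /
                  (μM (Metric.closedBall x (dist x y))).toReal))) ≤
          (∫⁻ s in Set.Ioi (0 : ℝ), ENNReal.ofReal (p s x y) ∂μ t) ∧
        (∫⁻ s in Set.Ioi (0 : ℝ), ENNReal.ofReal (p s x y) ∂μ t) ≤
          ENNReal.ofReal (C *
            (if x = y then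
              1 / (μM (Metric.closedBall x (genInv φ (1 / t) ^ (-(1 / α))))).toReal
            else
              min (1 / (μM (Metric.closedBall x (genInv φ (1 / t) ^ (-(1 / α))))).toReal)
                (t * φ (dist x y ^ (-α)) /
                  (μM (Metric.closedBall x (dist x y))).toReal))) := by
  classical
  have hmono : MonotoneOn φ (Set.Ici 0) := bern_mono hφ
  have hcont : ContinuousOn φ (Set.Ici 0) := hφ.1
  have hφnn : ∀ θ : ℝ, 0 ≤ θ → 0 ≤ φ θ := fun θ hθ => hφ.2.2.1 θ hθ
  have hC₁0 : 0 < C₁ := lt_of_lt_of_le one_pos hC₁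
  have hC₂0 : 0 < C₂ := lt_of_lt_of_le one_pos hC₂
  have hC₃0 : 0 < C₃ := lt_of_lt_of_le one_pos hC₃
  have hγ₂ : 0 < γ₂ := lt_of_lt_of_le hγ₁ hγ₁₂
  have hβ₂0 : 0 < β₂ := lt_of_lt_of_le hβ₁ hβ₁₂
  have hE1 := E1pos
  by_cases hφ1pos : 0 < φ 1
  · -- main case : φ positive
    have hφpos : ∀ θ : ℝ, 0 < θ → 0 < φ θ := by
      intro θ hθ
      rcases le_or_gt 1 θ with h1 | h1
      · exact lt_of_lt_of_le hφ1pos (hmono (Set.mem_Ici.mpr one_pos.le) (Set.mem_Ici.mpr hθ.le) h1)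
      · have h := hφup θ hθ h1.le 1 one_pos
        rw [mul_one] at h
        have h2 : 0 < c₄ * θ ^ β₂ * φ 1 :=
          mul_pos (mul_pos hc₄0 (Real.rpow_pos_of_pos hθ _)) hφ1pos
        linarith only [h, h2]
    have hunb : ∀ y : ℝ, ∃ θ, 0 < θ ∧ y ≤ φ θ := by
      intro y
      set a := max 1 ((C₃ * max y 1 / φ 1) ^ (1/β₁)) with hadef
      have ha1 : 1 ≤ a := le_max_left _ _
      have ha0 : 0 < a := lt_of_lt_of_le one_pos ha1
      refine ⟨a, ha0, ?_⟩
      have hsc := scale_up (a := a) (θ := 1) hC₃ hφlo ha1 one_pos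
      rw [mul_one] at hsc
      have hX : 0 ≤ C₃ * max y 1 / φ 1 := by
        apply div_nonneg _ hφ1pos.le
        exact mul_nonneg hC₃0.le (le_trans zero_le_one (le_max_right _ _))
      have hXa : C₃ * max y 1 / φ 1 ≤ a ^ β₁ :=
        le_rpow_of_rpow_inv_le hX hβ₁ (le_max_right _ _)
      have hy : y ≤ C₃⁻¹ * a ^ β₁ * φ 1 := by
        calc y ≤ max y 1 := le_max_left _ _
          _ = C₃⁻¹ * (C₃ * max y 1 / φ 1) * φ 1 := by field_simp
          _ ≤ C₃⁻¹ * a ^ β₁ * φ 1 := by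
              apply mul_le_mul_of_nonneg_right _ hφ1pos.le
              exact mul_le_mul_of_nonneg_left hXa (by positivity)
      linarith only [hy, hsc]
    -- constants
    set D : ℝ := (1 - Real.exp (-1))⁻¹ with hD
    have hD0 : 0 < D := inv_pos.mpr hE1
    have hDE : D * (1 - Real.exp (-1)) = 1 := inv_mul_cancel₀ hE1.ne'
    have hD1 : 1 ≤ D := by
      have h1 : 1 - Real.exp (-1) ≤ 1 := by linarith only [Real.exp_pos (-1)]
      calc (1:ℝ) = D * (1 - Real.exp (-1)) := hDE.symm
        _ ≤ D * 1 := mul_le_mul_of_nonneg_left h1 hD0.le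
        _ = D := mul_one _
    set eγ : ℝ := (1/α) * γ₂ with heγdef
    have heγ0 : 0 < eγ := by positivity
    set Sc : ℝ := Sconst eγ C₃⁻¹ β₁ with hScdef
    have hSc0 : 0 ≤ Sc := Sconst_nonneg _ _ _
    set Con : ℝ := C₂ * (C₁ * Real.exp 1 * Sc + 1) with hConDef
    have hCon0 : 0 < Con := by
      apply mul_pos hC₂0
      linarith only [mul_nonneg (mul_nonneg hC₁0.le (Real.exp_pos 1).le) hSc0]
    set Coff : ℝ := C₂ * (D + D) with hCoffDef
    have hCoff0 : 0 < Coff := mul_pos hC₂0 (by linarith only [hD0])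
    obtain ⟨κ, hκdef⟩ : ∃ x : ℝ, x = min 1 ((C₃ * (1 + Real.log 4)) ^ (-(1/β₁))) := ⟨_, rfl⟩
    have hlog4 : 0 < Real.log 4 := Real.log_pos (by norm_num)
    have hG0 : 0 < C₃ * (1 + Real.log 4) := mul_pos hC₃0 (by linarith only [hlog4])
    have hκ0 : 0 < κ := hκdef ▸ lt_min one_pos (Real.rpow_pos_of_pos hG0 _)
    have hκ1 : κ ≤ 1 := hκdef ▸ min_le_left _ _
    have hκi1 : 1 ≤ κ⁻¹ := (one_le_inv₀ hκ0).mpr hκ1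
    have hκprop : 1 + Real.log 4 ≤ C₃⁻¹ * (κ⁻¹) ^ β₁ := by
      have h1 : κ ≤ (C₃ * (1 + Real.log 4)) ^ (-(1/β₁)) := hκdef ▸ min_le_right _ _
      rw [Real.rpow_neg hG0.le] at h1
      have h2 : (C₃ * (1 + Real.log 4)) ^ (1/β₁) ≤ κ⁻¹ := by
        have h2' := inv_anti₀ hκ0 h1
        rwa [inv_inv] at h2'
      have h3 := le_rpow_of_rpow_inv_le hG0.le hβ₁ h2
      calc 1 + Real.log 4 = C₃⁻¹ * (C₃ * (1 + Real.log 4)) := by field_simp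
        _ ≤ C₃⁻¹ * (κ⁻¹) ^ β₁ := mul_le_mul_of_nonneg_left h3 (by positivity)
    obtain ⟨Λ, hΛdef⟩ : ∃ x : ℝ, x = max 2 ((4 * C₃ * D) ^ (1/β₁)) := ⟨_, rfl⟩
    have hΛ2 : (2:ℝ) ≤ Λ := hΛdef ▸ le_max_left _ _
    have hΛ1 : (1:ℝ) ≤ Λ := by linarith only [hΛ2]
    have hΛ0 : (0:ℝ) < Λ := by linarith only [hΛ2]
    have hΛβpos : 0 < Λ ^ β₁ := Real.rpow_pos_of_pos hΛ0 _
    have hΛβ : 4 * C₃ * D ≤ Λ ^ β₁ := by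
      refine le_rpow_of_rpow_inv_le ?_ hβ₁ (hΛdef ▸ le_max_right _ _)
      exact mul_nonneg (mul_nonneg (by norm_num) hC₃0.le) hD0.le
    have hΛprop : D * (C₃ * (Λ ^ β₁)⁻¹) ≤ 1/4 := by
      rw [show D * (C₃ * (Λ ^ β₁)⁻¹) = (D * C₃) / Λ ^ β₁ by rw [div_eq_mul_inv]; ring]
      rw [div_le_iff₀ hΛβpos]
      linarith only [hΛβ]
    have h1β₂ : 0 < 1 - β₂ := by linarith only [hβ₂]
    obtain ⟨R, hRdef⟩ : ∃ x : ℝ, x = max (max 2 κ⁻¹) ((2 * D * D * c₄⁻¹) ^ (1/(1-β₂))) := ⟨_, rfl⟩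
    have hR2 : (2:ℝ) ≤ R := hRdef ▸ le_trans (le_max_left _ _) (le_max_left _ _)
    have hR1 : (1:ℝ) ≤ R := by linarith only [hR2]
    have hR0 : (0:ℝ) < R := by linarith only [hR2]
    have hRκ : κ⁻¹ ≤ R := hRdef ▸ le_trans (le_max_right 2 κ⁻¹) (le_max_left _ _)
    have hRX : 2 * D * D * c₄⁻¹ ≤ R ^ (1-β₂) := by
      refine le_rpow_of_rpow_inv_le ?_ h1β₂ (hRdef ▸ le_max_right _ _)
      exact mul_nonneg (mul_nonneg (mul_nonneg (by norm_num) hD0.le) hD0.le) (inv_nonneg.mpr hc₄0.le)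
    have hRβ₂ : 0 < R ^ β₂ := Real.rpow_pos_of_pos hR0 _
    obtain ⟨c₅, hc₅def⟩ : ∃ x : ℝ, x = (1 - Real.exp (-1)) * c₄ * (R ^ β₂)⁻¹ / 2 := ⟨_, rfl⟩
    have hc₅0 : 0 < c₅ := hc₅def ▸
      div_pos (mul_pos (mul_pos hE1 hc₄0) (inv_pos.mpr hRβ₂)) two_pos
    have key2D : 2 * D ≤ (1 - Real.exp (-1)) * c₄ * R ^ (1-β₂) := by
      have hED : (1 - Real.exp (-1)) * D = 1 := by rw [mul_comm]; exact hDE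
      calc 2 * D = ((1 - Real.exp (-1)) * D) * (c₄ * c₄⁻¹) * (2 * D) := by
            rw [hED, mul_inv_cancel₀ hc₄0.ne']; ring
        _ = (1 - Real.exp (-1)) * c₄ * (2 * D * D * c₄⁻¹) := by ring
        _ ≤ (1 - Real.exp (-1)) * c₄ * R ^ (1-β₂) :=
            mul_le_mul_of_nonneg_left hRX (mul_nonneg hE1.le hc₄0.le)
    have hDRc₅ : D * R⁻¹ ≤ c₅ := by
      rw [show (1:ℝ)-β₂ = 1 + -β₂ by ring, Real.rpow_add hR0, Real.rpow_one,
        Real.rpow_neg hR0.le] at key2D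
      rw [hc₅def]
      calc D * R⁻¹ = (2 * D) / (2 * R) := by
            rw [div_eq_mul_inv, mul_inv]; ring
        _ ≤ ((1 - Real.exp (-1)) * c₄ * (R * (R ^ β₂)⁻¹)) / (2 * R) :=
            (div_le_div_iff_of_pos_right (by linarith only [hR0] : (0:ℝ) < 2 * R)).mpr key2D
        _ = ((1 - Real.exp (-1)) * c₄ * (R ^ β₂)⁻¹ / 2) * (R * R⁻¹) := by ring
        _ = (1 - Real.exp (-1)) * c₄ * (R ^ β₂)⁻¹ / 2 := by
            rw [mul_inv_cancel₀ hR0.ne', mul_one]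
    obtain ⟨Λ', hΛ'def⟩ : ∃ x : ℝ, x = max 2 ((D * C₃ * (2/c₅)) ^ (1/β₁)) := ⟨_, rfl⟩
    have hΛ'2 : (2:ℝ) ≤ Λ' := hΛ'def ▸ le_max_left _ _
    have hΛ'1 : (1:ℝ) ≤ Λ' := by linarith only [hΛ'2]
    have hΛ'0 : (0:ℝ) < Λ' := by linarith only [hΛ'2]
    have hΛ'βpos : 0 < Λ' ^ β₁ := Real.rpow_pos_of_pos hΛ'0 _
    have hΛ'β : D * C₃ * (2/c₅) ≤ Λ' ^ β₁ := by
      refine le_rpow_of_rpow_inv_le ?_ hβ₁ (hΛ'def ▸ le_max_right _ _)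
      exact mul_nonneg (mul_nonneg hD0.le hC₃0.le) (div_nonneg (by norm_num) hc₅0.le)
    have hΛ'prop : D * (C₃ * (Λ' ^ β₁)⁻¹) ≤ c₅/2 := by
      rw [show D * (C₃ * (Λ' ^ β₁)⁻¹) = (D * C₃) / Λ' ^ β₁ by rw [div_eq_mul_inv]; ring]
      rw [div_le_iff₀ hΛ'βpos]
      calc D * C₃ = (c₅ * c₅⁻¹) * (D * C₃) := by
            rw [mul_inv_cancel₀ hc₅0.ne', one_mul]
        _ = (c₅/2) * (D * C₃ * (2/c₅)) := by ring
        _ ≤ (c₅/2) * Λ' ^ β₁ :=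
            mul_le_mul_of_nonneg_left hΛ'β (div_nonneg hc₅0.le (by norm_num))
        _ = c₅/2 * Λ' ^ β₁ := rfl
    have hΛeγ : 0 < Λ ^ eγ := Real.rpow_pos_of_pos hΛ0 _
    have hΛ'eγ : 0 < Λ' ^ eγ := Real.rpow_pos_of_pos hΛ'0 _
    obtain ⟨con, hcon_def⟩ : ∃ x : ℝ, x = C₂⁻¹ * (C₁ * Λ ^ eγ)⁻¹ / 2 := ⟨_, rfl⟩
    have hcon0 : 0 < con := hcon_def ▸
      div_pos (mul_pos (inv_pos.mpr hC₂0) (inv_pos.mpr (mul_pos hC₁0 hΛeγ))) two_pos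
    obtain ⟨coff, hcoff_def⟩ : ∃ x : ℝ, x = C₂⁻¹ * (C₁ * Λ' ^ eγ)⁻¹ * (c₅/2) := ⟨_, rfl⟩
    have hcoff0 : 0 < coff := hcoff_def ▸
      mul_pos (mul_pos (inv_pos.mpr hC₂0) (inv_pos.mpr (mul_pos hC₁0 hΛ'eγ)))
        (div_pos hc₅0 two_pos)
    refine ⟨min con coff, max (max Con Coff) (min con coff), lt_min hcon0 hcoff0,
      le_max_right _ _, ?_⟩
    intro t ht x y
    obtain ⟨hprob, hsupp, hlap⟩ := hμ t ht
    haveI := hprob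
    have hLiA : ∀ l : ℝ, 0 ≤ l → (∫⁻ s, ENNReal.ofReal (Real.exp (-(l * s))) ∂μ t) =
        ENNReal.ofReal (Real.exp (-(t * φ l))) :=
      fun l hl => (lap_lint (μ t) hsupp l (t * φ l) hl (by rw [hlap l hl]; congr 1; ring)).1
    have hLiB : ∀ l : ℝ, 0 ≤ l → (∫⁻ s, ENNReal.ofReal (1 - Real.exp (-(l * s))) ∂μ t) =
        ENNReal.ofReal (1 - Real.exp (-(t * φ l))) :=
      fun l hl => (lap_lint (μ t) hsupp l (t * φ l) hl (by rw [hlap l hl]; congr 1; ring)).2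
    obtain ⟨hT0, hTval⟩ := genInv_spec hmono hcont hφ0 hunb (1/t) (one_div_pos.mpr ht)
    set T : ℝ := genInv φ (1 / t) with hTdef
    have htφT : t * φ T = 1 := by rw [hTval]; field_simp
    set s₀ : ℝ := T⁻¹ with hs₀def
    have hs₀ : 0 < s₀ := inv_pos.mpr hT0
    have hr₀eq : s₀ ^ (1/α) = T ^ (-(1/α)) := by
      rw [hs₀def, show -(1/α) = (-1) * (1/α) by ring, Real.rpow_mul hT0.le, Real.rpow_neg_one]
    have hVmono : ∀ a b : ℝ, a ≤ b →
        (μM (Metric.closedBall x a)).toReal ≤ (μM (Metric.closedBall x b)).toReal :=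
      fun a b hab => ENNReal.toReal_mono (hVfin x b)
        (measure_mono (Metric.closedBall_subset_closedBall hab))
    have hVd : ∀ l r : ℝ, 1 ≤ l → 0 < r → (μM (Metric.closedBall x (l * r))).toReal ≤
        C₁ * l ^ γ₂ * (μM (Metric.closedBall x r)).toReal := by
      intro l r hl hr
      rcases eq_or_lt_of_le hl with h1 | h1
      · rw [← h1, one_mul, Real.one_rpow, mul_one]
        calc (μM (Metric.closedBall x r)).toReal = 1 * (μM (Metric.closedBall x r)).toReal := (one_mul _).symm
          _ ≤ C₁ * (μM (Metric.closedBall x r)).toReal := mul_le_mul_of_nonneg_right hC₁ ENNReal.toReal_nonneg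
      · exact (hVdoub x l r h1 hr).2
    have hVr₀ : 0 < (μM (Metric.closedBall x (T ^ (-(1/α))))).toReal :=
      hVpos x _ (Real.rpow_pos_of_pos hT0 _)
    have htail_lo : ∀ u : ℝ, 0 < u → μ t (Set.Iic u) ≤
        ENNReal.ofReal (Real.exp 1 * Real.exp (-(t * φ u⁻¹))) :=
      fun u hu => tail_lo (μ t) u (t * φ u⁻¹) hu (hLiA u⁻¹ (inv_nonneg.mpr hu.le))
    have htail_up : ∀ u : ℝ, 0 < u → μ t (Set.Ioi u) ≤
        ENNReal.ofReal ((1 - Real.exp (-1))⁻¹ * (1 - Real.exp (-(t * φ u⁻¹)))) :=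
      fun u hu => tail_up (μ t) u (t * φ u⁻¹) hu (hLiB u⁻¹ (inv_nonneg.mpr hu.le))
    have hmeanB : ∀ u : ℝ, 0 < u → (∫⁻ s in Set.Iic u, ENNReal.ofReal s ∂μ t) ≤
        ENNReal.ofReal (u * (1 - Real.exp (-1))⁻¹ * (1 - Real.exp (-(t * φ u⁻¹)))) :=
      fun u hu => mean_bd (μ t) u (t * φ u⁻¹) hu (hLiB u⁻¹ (inv_nonneg.mpr hu.le))
    have hpm : Measurable fun s : ℝ => ENNReal.ofReal (p s x y) := by
      have h1 : Measurable fun s : ℝ => (s, (x, y)) :=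
        measurable_id.prodMk measurable_const
      exact ENNReal.measurable_ofReal.comp (hpmeas.comp h1)
    -- upper bound, diagonal part
    have hUBdiag : (∫⁻ s in Set.Ioi (0:ℝ), ENNReal.ofReal (p s x y) ∂μ t) ≤
        ENNReal.ofReal (Con * (1 / (μM (Metric.closedBall x (T ^ (-(1/α))))).toReal)) := by
      have hg : ∀ s, 0 < s → ENNReal.ofReal (p s x y) ≤
          ENNReal.ofReal (C₂ * (1 / (μM (Metric.closedBall x (s ^ (1/α)))).toReal)) := by
        intro s hs
        apply ENNReal.ofReal_le_ofReal
        have h2 := (hp s hs x y).2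
        split_ifs at h2 with hxy
        · exact h2
        · exact h2.trans (mul_le_mul_of_nonneg_left (min_le_left _ _) hC₂0.le)
      have htailn : ∀ n : ℕ, μ t (Set.Iic (s₀/2^n)) ≤
          ENNReal.ofReal (Real.exp 1 * Real.exp (-(C₃⁻¹ * ((2:ℝ)^n) ^ β₁))) := by
        intro n
        have h2n : (0:ℝ) < 2^n := by positivity
        have hu : 0 < s₀ / 2^n := by positivity
        have hinv : (s₀ / 2^n)⁻¹ = 2^n * T := by
          rw [hs₀def]; field_simp
        have hscale : C₃⁻¹ * ((2:ℝ)^n) ^ β₁ ≤ t * φ ((2:ℝ)^n * T) := by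
          have hsc := scale_up (a := (2:ℝ)^n) (θ := T) hC₃ hφlo
            (one_le_pow₀ (by norm_num : (1:ℝ) ≤ 2)) hT0
          calc C₃⁻¹ * ((2:ℝ)^n) ^ β₁ = C₃⁻¹ * ((2:ℝ)^n) ^ β₁ * (t * φ T) := by
                rw [htφT, mul_one]
            _ = t * (C₃⁻¹ * ((2:ℝ)^n) ^ β₁ * φ T) := by ring
            _ ≤ t * φ ((2:ℝ)^n * T) := mul_le_mul_of_nonneg_left hsc ht.le
        calc μ t (Set.Iic (s₀/2^n))
            ≤ ENNReal.ofReal (Real.exp 1 * Real.exp (-(t * φ (s₀/2^n)⁻¹))) := htail_lo _ hu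
          _ ≤ ENNReal.ofReal (Real.exp 1 * Real.exp (-(C₃⁻¹ * ((2:ℝ)^n) ^ β₁))) := by
              apply ENNReal.ofReal_le_ofReal
              apply mul_le_mul_of_nonneg_left _ (Real.exp_pos 1).le
              apply Real.exp_le_exp.mpr
              rw [hinv]
              linarith only [hscale]
      have happ := ub_diag (μ t) (fun r => (μM (Metric.closedBall x r)).toReal)
        (fun r hr => hVpos x r hr) (fun a b hab => hVmono a b hab)
        C₁ C₂ C₃ γ₂ α β₁ hC₁ hC₂0.le hC₃ hα hβ₁ hγ₂ (fun l r hl hr => hVd l r hl hr)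
        s₀ hs₀ (fun s => ENNReal.ofReal (p s x y)) hg htailn
      rw [hConDef, hScdef, heγdef]
      rw [hr₀eq] at happ
      exact happ
    -- upper bound, off-diagonal part
    have hUBoff : x ≠ y → (∫⁻ s in Set.Ioi (0:ℝ), ENNReal.ofReal (p s x y) ∂μ t) ≤
        ENNReal.ofReal (Coff * (t * φ (dist x y ^ (-α)) /
          (μM (Metric.closedBall x (dist x y))).toReal)) := by
      intro hxy
      have hd0 : 0 < dist x y := dist_pos.mpr hxy
      have hu0 : 0 < dist x y ^ α := Real.rpow_pos_of_pos hd0 _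
      have hVd0 : 0 < (μM (Metric.closedBall x (dist x y))).toReal := hVpos x _ hd0
      have hw0 : 0 ≤ t * φ ((dist x y ^ α)⁻¹) :=
        mul_nonneg ht.le (hφnn _ (inv_nonneg.mpr hu0.le))
      have hud : (dist x y ^ α) ^ (1/α) = dist x y := by
        rw [← Real.rpow_mul hd0.le, mul_one_div, div_self hα.ne', Real.rpow_one]
      have hg1 : ∀ s ∈ Set.Ioc (0:ℝ) (dist x y ^ α), ENNReal.ofReal (p s x y) ≤
          ENNReal.ofReal ((C₂ * (1 / (μM (Metric.closedBall x (dist x y))).toReal)) *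
            (dist x y ^ α)⁻¹ * s) := by
        intro s hs
        apply ENNReal.ofReal_le_ofReal
        have h2 := (hp s hs.1 x y).2
        rw [if_neg hxy] at h2
        have h3 : p s x y ≤ C₂ * (s / ((μM (Metric.closedBall x (dist x y))).toReal * dist x y ^ α)) :=
          h2.trans (mul_le_mul_of_nonneg_left (min_le_right _ _) hC₂0.le)
        refine h3.trans (le_of_eq ?_)
        rw [div_eq_mul_inv, mul_inv]
        ring
      have hg2 : ∀ s ∈ Set.Ioi (dist x y ^ α), ENNReal.ofReal (p s x y) ≤
          ENNReal.ofReal (C₂ * (1 / (μM (Metric.closedBall x (dist x y))).toReal)) := by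
        intro s hs
        rw [Set.mem_Ioi] at hs
        have hs0 : 0 < s := lt_trans hu0 hs
        apply ENNReal.ofReal_le_ofReal
        have h2 := (hp s hs0 x y).2
        rw [if_neg hxy] at h2
        have h3 : p s x y ≤ C₂ * (1 / (μM (Metric.closedBall x (s ^ (1/α)))).toReal) :=
          h2.trans (mul_le_mul_of_nonneg_left (min_le_left _ _) hC₂0.le)
        refine h3.trans (mul_le_mul_of_nonneg_left ?_ hC₂0.le)
        apply one_div_le_one_div_of_le hVd0
        rw [← hud]
        exact hVmono _ _ (Real.rpow_le_rpow hu0.le hs.le (by positivity))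
      have happ := ub_off (μ t) (dist x y ^ α) (t * φ ((dist x y ^ α)⁻¹))
        (C₂ * (1 / (μM (Metric.closedBall x (dist x y))).toReal)) hu0 hw0
        (mul_nonneg hC₂0.le (by positivity)) (fun s => ENNReal.ofReal (p s x y))
        hg1 hg2 (hmeanB _ hu0) (htail_up _ hu0)
      refine happ.trans (ENNReal.ofReal_le_ofReal (le_of_eq ?_))
      rw [hCoffDef, hD, Real.rpow_neg hd0.le α]
      ring
    have hConC : Con ≤ max (max Con Coff) (min con coff) :=
      le_trans (le_max_left _ _) (le_max_left _ _)
    have hCoffC : Coff ≤ max (max Con Coff) (min con coff) :=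
      le_trans (le_max_right _ _) (le_max_left _ _)
    have hAnn : 0 ≤ 1 / (μM (Metric.closedBall x (T ^ (-(1/α))))).toReal := by positivity
    have hBnn : 0 ≤ t * φ (dist x y ^ (-α)) / (μM (Metric.closedBall x (dist x y))).toReal :=
      div_nonneg (mul_nonneg ht.le (hφnn _ (Real.rpow_nonneg dist_nonneg _)))
        ENNReal.toReal_nonneg
    refine ⟨?_, ?_⟩
    · -- lower bound
      by_cases hcase : dist x y ^ α ≤ κ * s₀
      · -- case 1 : near-diagonal
        have ha0 : 0 < κ * s₀ := mul_pos hκ0 hs₀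
        have hb0 : 0 < Λ * s₀ := mul_pos hΛ0 hs₀
        have hab : κ * s₀ ≤ Λ * s₀ := by
          apply mul_le_mul_of_nonneg_right _ hs₀.le
          linarith only [hκ1, hΛ1]
        have hainv : (κ * s₀)⁻¹ = κ⁻¹ * T := by rw [hs₀def, mul_inv, inv_inv]
        have hbinv : (Λ * s₀)⁻¹ = Λ⁻¹ * T := by rw [hs₀def, mul_inv, inv_inv]
        have hIic : μ t (Set.Iic (κ * s₀)) ≤ ENNReal.ofReal (1/4) := by
          refine (htail_lo _ ha0).trans (ENNReal.ofReal_le_ofReal ?_)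
          have hsc : 1 + Real.log 4 ≤ t * φ ((κ * s₀)⁻¹) := by
            rw [hainv]
            have hsc2 := scale_up (a := κ⁻¹) (θ := T) hC₃ hφlo hκi1 hT0
            calc 1 + Real.log 4 ≤ C₃⁻¹ * (κ⁻¹) ^ β₁ := hκprop
              _ = C₃⁻¹ * (κ⁻¹) ^ β₁ * (t * φ T) := by rw [htφT, mul_one]
              _ = t * (C₃⁻¹ * (κ⁻¹) ^ β₁ * φ T) := by ring
              _ ≤ t * φ (κ⁻¹ * T) := mul_le_mul_of_nonneg_left hsc2 ht.le
          calc Real.exp 1 * Real.exp (-(t * φ ((κ * s₀)⁻¹)))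
              ≤ Real.exp 1 * Real.exp (-(1 + Real.log 4)) := by
                apply mul_le_mul_of_nonneg_left _ (Real.exp_pos 1).le
                exact Real.exp_le_exp.mpr (by linarith only [hsc])
            _ = 1/4 := by
                rw [← Real.exp_add, show (1:ℝ) + -(1 + Real.log 4) = -Real.log 4 by ring,
                  Real.exp_neg, Real.exp_log (by norm_num : (0:ℝ) < 4)]
                norm_num
        have hIoib : μ t (Set.Ioi (Λ * s₀)) ≤ ENNReal.ofReal (1/4) := by
          refine (htail_up _ hb0).trans (ENNReal.ofReal_le_ofReal ?_)
          have hsc : t * φ ((Λ * s₀)⁻¹) ≤ C₃ * (Λ ^ β₁)⁻¹ := by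
            rw [hbinv]
            have hΛinv0 : 0 < Λ⁻¹ := inv_pos.mpr hΛ0
            have hΛinv1 : Λ⁻¹ ≤ 1 := inv_le_one_of_one_le₀ hΛ1
            have hsc2 := hφlo Λ⁻¹ hΛinv0 hΛinv1 T hT0
            calc t * φ (Λ⁻¹ * T) ≤ t * (C₃ * (Λ⁻¹) ^ β₁ * φ T) :=
                  mul_le_mul_of_nonneg_left hsc2 ht.le
              _ = C₃ * (Λ⁻¹) ^ β₁ * (t * φ T) := by ring
              _ = C₃ * (Λ ^ β₁)⁻¹ := by rw [htφT, mul_one, Real.inv_rpow hΛ0.le]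
          have h1e : 1 - Real.exp (-(t * φ ((Λ * s₀)⁻¹))) ≤ C₃ * (Λ ^ β₁)⁻¹ :=
            (one_sub_exp_le _).trans hsc
          calc (1 - Real.exp (-1))⁻¹ * (1 - Real.exp (-(t * φ ((Λ * s₀)⁻¹))))
              ≤ (1 - Real.exp (-1))⁻¹ * (C₃ * (Λ ^ β₁)⁻¹) :=
                mul_le_mul_of_nonneg_left h1e (inv_pos.mpr hE1).le
            _ ≤ 1/4 := by rw [← hD]; exact hΛprop
        have hIoc2 : ENNReal.ofReal (1/2) ≤ μ t (Set.Ioc (κ * s₀) (Λ * s₀)) := by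
          by_contra hcon2
          push_neg at hcon2
          have hsplit1 : (1:ℝ≥0∞) ≤ μ t (Set.Iic (κ * s₀)) + μ t (Set.Ioi (κ * s₀)) := by
            rw [← measure_univ (μ := μ t), ← Set.Iic_union_Ioi (a := κ * s₀)]
            exact measure_union_le _ _
          have hsplit2 : μ t (Set.Ioi (κ * s₀)) ≤
              μ t (Set.Ioc (κ * s₀) (Λ * s₀)) + μ t (Set.Ioi (Λ * s₀)) := by
            refine le_trans (measure_mono ?_) (measure_union_le _ _)
            intro s hs
            rcases le_or_gt s (Λ * s₀) with h | h
            · exact Or.inl ⟨hs, h⟩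
            · exact Or.inr h
          have hchain : (1:ℝ≥0∞) ≤ μ t (Set.Ioc (κ * s₀) (Λ * s₀)) + ENNReal.ofReal (1/2) := by
            calc (1:ℝ≥0∞) ≤ μ t (Set.Iic (κ * s₀)) + μ t (Set.Ioi (κ * s₀)) := hsplit1
              _ ≤ ENNReal.ofReal (1/4) +
                  (μ t (Set.Ioc (κ * s₀) (Λ * s₀)) + ENNReal.ofReal (1/4)) :=
                add_le_add hIic (hsplit2.trans (add_le_add_right hIoib _))
              _ = μ t (Set.Ioc (κ * s₀) (Λ * s₀)) +
                  (ENNReal.ofReal (1/4) + ENNReal.ofReal (1/4)) := by ring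
              _ = μ t (Set.Ioc (κ * s₀) (Λ * s₀)) + ENNReal.ofReal (1/2) := by
                rw [← ENNReal.ofReal_add (by norm_num) (by norm_num)]
                norm_num
          have hlt : μ t (Set.Ioc (κ * s₀) (Λ * s₀)) + ENNReal.ofReal (1/2) <
              ENNReal.ofReal (1/2) + ENNReal.ofReal (1/2) :=
            ENNReal.add_lt_add_right ENNReal.ofReal_ne_top hcon2
          have hone : ENNReal.ofReal (1/2) + ENNReal.ofReal (1/2) = (1:ℝ≥0∞) := by
            rw [← ENNReal.ofReal_add (by norm_num) (by norm_num)]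
            norm_num
          rw [hone] at hlt
          exact absurd (lt_of_le_of_lt hchain hlt) (lt_irrefl _)
        have hbox : ∀ s ∈ Set.Ioc (κ * s₀) (Λ * s₀),
            ENNReal.ofReal (C₂⁻¹ * (1 / (C₁ * Λ ^ eγ *
              (μM (Metric.closedBall x (T ^ (-(1/α))))).toReal))) ≤
              ENNReal.ofReal (p s x y) := by
          intro s hs
          have hs0 : 0 < s := lt_trans ha0 hs.1
          have h1 := (hp s hs0 x y).1
          rw [if_pos (le_trans hcase hs.1.le)] at h1
          apply ENNReal.ofReal_le_ofReal
          refine le_trans ?_ h1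
          have hVs1 : 0 < (μM (Metric.closedBall x (s ^ (1/α)))).toReal :=
            hVpos x _ (Real.rpow_pos_of_pos hs0 _)
          have hVs : (μM (Metric.closedBall x (s ^ (1/α)))).toReal ≤
              C₁ * Λ ^ eγ * (μM (Metric.closedBall x (T ^ (-(1/α))))).toReal := by
            have hsb : s ^ (1/α) ≤ (Λ * s₀) ^ (1/α) :=
              Real.rpow_le_rpow hs0.le hs.2 (by positivity)
            have hbb : (Λ * s₀) ^ (1/α) = Λ ^ (1/α) * s₀ ^ (1/α) :=
              Real.mul_rpow hΛ0.le hs₀.le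
            have hΛr1 : (1:ℝ) ≤ Λ ^ (1/α) := Real.one_le_rpow hΛ1 (by positivity)
            have hVd2 := hVd (Λ ^ (1/α)) (s₀ ^ (1/α)) hΛr1 (Real.rpow_pos_of_pos hs₀ _)
            rw [← Real.rpow_mul hΛ0.le, ← heγdef] at hVd2
            calc (μM (Metric.closedBall x (s ^ (1/α)))).toReal
                ≤ (μM (Metric.closedBall x ((Λ * s₀) ^ (1/α)))).toReal := hVmono _ _ hsb
              _ = (μM (Metric.closedBall x (Λ ^ (1/α) * s₀ ^ (1/α)))).toReal := by rw [hbb]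
              _ ≤ C₁ * Λ ^ eγ * (μM (Metric.closedBall x (s₀ ^ (1/α)))).toReal := hVd2
              _ = C₁ * Λ ^ eγ * (μM (Metric.closedBall x (T ^ (-(1/α))))).toReal := by
                  rw [hr₀eq]
          calc C₂⁻¹ * (1 / (C₁ * Λ ^ eγ * (μM (Metric.closedBall x (T ^ (-(1/α))))).toReal))
              ≤ C₂⁻¹ * (1 / (μM (Metric.closedBall x (s ^ (1/α)))).toReal) := by
                apply mul_le_mul_of_nonneg_left _ (inv_nonneg.mpr hC₂0.le)
                exact one_div_le_one_div_of_le hVs1 hVs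
            _ = C₂⁻¹ * 1 / (μM (Metric.closedBall x (s ^ (1/α)))).toReal := by ring
        have hlowint : ENNReal.ofReal (con *
            (1 / (μM (Metric.closedBall x (T ^ (-(1/α))))).toReal)) ≤
            ∫⁻ s in Set.Ioi (0:ℝ), ENNReal.ofReal (p s x y) ∂μ t := by
          calc ENNReal.ofReal (con * (1 / (μM (Metric.closedBall x (T ^ (-(1/α))))).toReal))
              = ENNReal.ofReal (C₂⁻¹ * (1 / (C₁ * Λ ^ eγ *
                  (μM (Metric.closedBall x (T ^ (-(1/α))))).toReal))) * ENNReal.ofReal (1/2) := by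
                rw [← ENNReal.ofReal_mul (by positivity)]
                congr 1
                rw [hcon_def]
                rw [show C₂⁻¹ * (1 / (C₁ * Λ ^ eγ *
                    (μM (Metric.closedBall x (T ^ (-(1/α))))).toReal)) * (1/2) =
                  (C₂⁻¹ * (C₁ * Λ ^ eγ)⁻¹ / 2) *
                    (1 / (μM (Metric.closedBall x (T ^ (-(1/α))))).toReal) by
                  rw [mul_inv]; ring]
            _ ≤ ENNReal.ofReal (C₂⁻¹ * (1 / (C₁ * Λ ^ eγ *
                  (μM (Metric.closedBall x (T ^ (-(1/α))))).toReal))) *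
                  μ t (Set.Ioc (κ * s₀) (Λ * s₀)) := mul_le_mul_right hIoc2 _
            _ = ∫⁻ _ in Set.Ioc (κ * s₀) (Λ * s₀), ENNReal.ofReal (C₂⁻¹ * (1 / (C₁ * Λ ^ eγ *
                  (μM (Metric.closedBall x (T ^ (-(1/α))))).toReal))) ∂μ t :=
                (setLIntegral_const _ _).symm
            _ ≤ ∫⁻ s in Set.Ioc (κ * s₀) (Λ * s₀), ENNReal.ofReal (p s x y) ∂μ t :=
                setLIntegral_mono hpm hbox
            _ ≤ ∫⁻ s in Set.Ioi (0:ℝ), ENNReal.ofReal (p s x y) ∂μ t :=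
                lintegral_mono_set (fun s hs => lt_trans ha0 hs.1)
        refine le_trans (ENNReal.ofReal_le_ofReal ?_) hlowint
        have hm_le : (if x = y then
            1 / (μM (Metric.closedBall x (T ^ (-(1/α))))).toReal
          else
            min (1 / (μM (Metric.closedBall x (T ^ (-(1/α))))).toReal)
              (t * φ (dist x y ^ (-α)) / (μM (Metric.closedBall x (dist x y))).toReal)) ≤
            1 / (μM (Metric.closedBall x (T ^ (-(1/α))))).toReal := by
          split_ifs
          · exact le_rfl
          · exact min_le_left _ _
        have hm_nn : 0 ≤ (if x = y then
            1 / (μM (Metric.closedBall x (T ^ (-(1/α))))).toReal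
          else
            min (1 / (μM (Metric.closedBall x (T ^ (-(1/α))))).toReal)
              (t * φ (dist x y ^ (-α)) / (μM (Metric.closedBall x (dist x y))).toReal)) := by
          split_ifs
          · exact hAnn
          · exact le_min hAnn hBnn
        exact mul_le_mul (min_le_left _ _) hm_le hm_nn hcon0.le
      · -- case 2 : off-diagonal
        push_neg at hcase
        have ha0 : 0 < κ * s₀ := mul_pos hκ0 hs₀
        have hu0 : 0 < dist x y ^ α := lt_trans ha0 hcase
        have hd0 : 0 < dist x y := by
          rcases eq_or_lt_of_le (dist_nonneg (x := x) (y := y)) with h | h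
          · exfalso
            rw [← h, Real.zero_rpow hα.ne'] at hu0
            exact lt_irrefl _ hu0
          · exact h
        have hxy : x ≠ y := by
          intro h
          rw [h, dist_self] at hd0
          exact lt_irrefl _ hd0
        have hVd0 : 0 < (μM (Metric.closedBall x (dist x y))).toReal := hVpos x _ hd0
        have huinv0 : 0 < (dist x y ^ α)⁻¹ := inv_pos.mpr hu0
        have hw0 : 0 < t * φ ((dist x y ^ α)⁻¹) := mul_pos ht (hφpos _ huinv0)
        have hud : (dist x y ^ α) ^ (1/α) = dist x y := by
          rw [← Real.rpow_mul hd0.le, mul_one_div, div_self hα.ne', Real.rpow_one]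
        have hw_up : t * φ ((dist x y ^ α)⁻¹) ≤ c₄⁻¹ * (κ ^ β₂)⁻¹ := by
          have hainv : (κ * s₀)⁻¹ = κ⁻¹ * T := by rw [hs₀def, mul_inv, inv_inv]
          have h1 : (dist x y ^ α)⁻¹ ≤ κ⁻¹ * T := by
            rw [← hainv]
            exact inv_anti₀ ha0 hcase.le
          have h2 : φ ((dist x y ^ α)⁻¹) ≤ φ (κ⁻¹ * T) :=
            hmono (Set.mem_Ici.mpr huinv0.le)
              (Set.mem_Ici.mpr (le_trans huinv0.le h1)) h1
          have h3 := scale_up' (a := κ⁻¹) (θ := T) hc₄0 hφup hκi1 hT0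
          calc t * φ ((dist x y ^ α)⁻¹) ≤ t * φ (κ⁻¹ * T) :=
                mul_le_mul_of_nonneg_left h2 ht.le
            _ ≤ t * (c₄⁻¹ * (κ⁻¹) ^ β₂ * φ T) := mul_le_mul_of_nonneg_left h3 ht.le
            _ = c₄⁻¹ * (κ⁻¹) ^ β₂ * (t * φ T) := by ring
            _ = c₄⁻¹ * (κ ^ β₂)⁻¹ := by rw [htφT, mul_one, Real.inv_rpow hκ0.le]
        have hmR : c₄ * (R ^ β₂)⁻¹ * (t * φ ((dist x y ^ α)⁻¹)) ≤
            t * φ ((R * dist x y ^ α)⁻¹) := by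
          have h1 := hφup R⁻¹ (inv_pos.mpr hR0) (inv_le_one_of_one_le₀ hR1)
            ((dist x y ^ α)⁻¹) huinv0
          rw [mul_inv]
          calc c₄ * (R ^ β₂)⁻¹ * (t * φ ((dist x y ^ α)⁻¹))
              = t * (c₄ * (R⁻¹) ^ β₂ * φ ((dist x y ^ α)⁻¹)) := by
                rw [Real.inv_rpow hR0.le]; ring
            _ ≤ t * φ (R⁻¹ * (dist x y ^ α)⁻¹) := mul_le_mul_of_nonneg_left h1 ht.le
        have hx1 : c₄ * (R ^ β₂)⁻¹ * (t * φ ((dist x y ^ α)⁻¹)) ≤ 1 := by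
          have hRκ1 : (1:ℝ) ≤ R * κ := by
            calc (1:ℝ) = κ⁻¹ * κ := (inv_mul_cancel₀ hκ0.ne').symm
              _ ≤ R * κ := mul_le_mul_of_nonneg_right hRκ hκ0.le
          have hRκβ : (1:ℝ) ≤ (R * κ) ^ β₂ := Real.one_le_rpow hRκ1 hβ₂0.le
          have hmul : (R ^ β₂) * (κ ^ β₂) = (R * κ) ^ β₂ := (Real.mul_rpow hR0.le hκ0.le).symm
          calc c₄ * (R ^ β₂)⁻¹ * (t * φ ((dist x y ^ α)⁻¹))
              ≤ c₄ * (R ^ β₂)⁻¹ * (c₄⁻¹ * (κ ^ β₂)⁻¹) :=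
                mul_le_mul_of_nonneg_left hw_up
                  (mul_nonneg hc₄0.le (inv_nonneg.mpr hRβ₂.le))
            _ = (c₄ * c₄⁻¹) * ((R ^ β₂) * (κ ^ β₂))⁻¹ := by rw [mul_inv]; ring
            _ = ((R * κ) ^ β₂)⁻¹ := by rw [mul_inv_cancel₀ hc₄0.ne', one_mul, hmul]
            _ ≤ 1 := inv_le_one_of_one_le₀ hRκβ
        have hreal : c₅ * (t * φ ((dist x y ^ α)⁻¹)) +
            R⁻¹ * ((1 - Real.exp (-1))⁻¹ * (1 - Real.exp (-(t * φ ((dist x y ^ α)⁻¹))))) ≤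
            1 - Real.exp (-(t * φ ((R * dist x y ^ α)⁻¹))) := by
          have hA : (1 - Real.exp (-1)) * (c₄ * (R ^ β₂)⁻¹ * (t * φ ((dist x y ^ α)⁻¹))) ≤
              1 - Real.exp (-(t * φ ((R * dist x y ^ α)⁻¹))) := by
            have h1 := convex_exp_ineq
              (x := c₄ * (R ^ β₂)⁻¹ * (t * φ ((dist x y ^ α)⁻¹)))
              (mul_nonneg (mul_nonneg hc₄0.le (inv_nonneg.mpr hRβ₂.le)) hw0.le) hx1
            refine h1.trans ?_
            have h2 := Real.exp_le_exp.mpr (neg_le_neg hmR)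
            linarith only [h2]
          have hB : R⁻¹ * ((1 - Real.exp (-1))⁻¹ *
              (1 - Real.exp (-(t * φ ((dist x y ^ α)⁻¹))))) ≤
              R⁻¹ * ((1 - Real.exp (-1))⁻¹ * (t * φ ((dist x y ^ α)⁻¹))) := by
            apply mul_le_mul_of_nonneg_left _ (inv_nonneg.mpr hR0.le)
            exact mul_le_mul_of_nonneg_left (one_sub_exp_le _) (inv_pos.mpr hE1).le
          have hc : c₅ + R⁻¹ * (1 - Real.exp (-1))⁻¹ ≤
              (1 - Real.exp (-1)) * (c₄ * (R ^ β₂)⁻¹) := by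
            have h2c₅ : (1 - Real.exp (-1)) * (c₄ * (R ^ β₂)⁻¹) = 2 * c₅ := by
              rw [hc₅def]; ring
            rw [h2c₅]
            have hDR : R⁻¹ * (1 - Real.exp (-1))⁻¹ ≤ c₅ := by
              calc R⁻¹ * (1 - Real.exp (-1))⁻¹ = D * R⁻¹ := by rw [hD]; ring
                _ ≤ c₅ := hDRc₅
            linarith only [hDR]
          calc c₅ * (t * φ ((dist x y ^ α)⁻¹)) +
                R⁻¹ * ((1 - Real.exp (-1))⁻¹ * (1 - Real.exp (-(t * φ ((dist x y ^ α)⁻¹)))))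
              ≤ c₅ * (t * φ ((dist x y ^ α)⁻¹)) +
                R⁻¹ * ((1 - Real.exp (-1))⁻¹ * (t * φ ((dist x y ^ α)⁻¹))) :=
                add_le_add_right hB _
            _ = (c₅ + R⁻¹ * (1 - Real.exp (-1))⁻¹) * (t * φ ((dist x y ^ α)⁻¹)) := by ring
            _ ≤ ((1 - Real.exp (-1)) * (c₄ * (R ^ β₂)⁻¹)) * (t * φ ((dist x y ^ α)⁻¹)) :=
                mul_le_mul_of_nonneg_right hc hw0.le
            _ = (1 - Real.exp (-1)) * (c₄ * (R ^ β₂)⁻¹ * (t * φ ((dist x y ^ α)⁻¹))) := by ring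
            _ ≤ 1 - Real.exp (-(t * φ ((R * dist x y ^ α)⁻¹))) := hA
        have hRu0 : 0 < R * dist x y ^ α := mul_pos hR0 hu0
        have hTL := tail_lower (μ t) (dist x y ^ α) R (t * φ ((dist x y ^ α)⁻¹))
          (t * φ ((R * dist x y ^ α)⁻¹)) hu0 hR1 (hmeanB _ hu0)
          (hLiB ((R * dist x y ^ α)⁻¹) (inv_nonneg.mpr hRu0.le))
        have hwexp : Real.exp (-(t * φ ((dist x y ^ α)⁻¹))) ≤ 1 :=
          Real.exp_le_one_iff.mpr (by linarith only [hw0])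
        have hYnn : 0 ≤ R⁻¹ * ((1 - Real.exp (-1))⁻¹ *
            (1 - Real.exp (-(t * φ ((dist x y ^ α)⁻¹))))) :=
          mul_nonneg (inv_nonneg.mpr hR0.le)
            (mul_nonneg (inv_pos.mpr hE1).le (by linarith only [hwexp]))
        have hIoiu : ENNReal.ofReal (c₅ * (t * φ ((dist x y ^ α)⁻¹))) ≤
            μ t (Set.Ioi (dist x y ^ α)) := by
          have hsum : ENNReal.ofReal (c₅ * (t * φ ((dist x y ^ α)⁻¹))) +
              ENNReal.ofReal (R⁻¹ * ((1 - Real.exp (-1))⁻¹ *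
                (1 - Real.exp (-(t * φ ((dist x y ^ α)⁻¹)))))) ≤
              μ t (Set.Ioi (dist x y ^ α)) +
              ENNReal.ofReal (R⁻¹ * ((1 - Real.exp (-1))⁻¹ *
                (1 - Real.exp (-(t * φ ((dist x y ^ α)⁻¹)))))) := by
            refine le_trans ?_ hTL
            rw [← ENNReal.ofReal_add (mul_nonneg hc₅0.le hw0.le) hYnn]
            exact ENNReal.ofReal_le_ofReal hreal
          exact (ENNReal.add_le_add_iff_right ENNReal.ofReal_ne_top).mp hsum
        have hΛ'u0 : 0 < Λ' * dist x y ^ α := mul_pos hΛ'0 hu0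
        have hIoiΛ' : μ t (Set.Ioi (Λ' * dist x y ^ α)) ≤
            ENNReal.ofReal (c₅/2 * (t * φ ((dist x y ^ α)⁻¹))) := by
          refine (htail_up _ hΛ'u0).trans (ENNReal.ofReal_le_ofReal ?_)
          have hsc : t * φ ((Λ' * dist x y ^ α)⁻¹) ≤
              C₃ * (Λ' ^ β₁)⁻¹ * (t * φ ((dist x y ^ α)⁻¹)) := by
            rw [mul_inv]
            have h1 := hφlo Λ'⁻¹ (inv_pos.mpr hΛ'0) (inv_le_one_of_one_le₀ hΛ'1)
              ((dist x y ^ α)⁻¹) huinv0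
            calc t * φ (Λ'⁻¹ * (dist x y ^ α)⁻¹)
                ≤ t * (C₃ * (Λ'⁻¹) ^ β₁ * φ ((dist x y ^ α)⁻¹)) :=
                  mul_le_mul_of_nonneg_left h1 ht.le
              _ = C₃ * (Λ'⁻¹) ^ β₁ * (t * φ ((dist x y ^ α)⁻¹)) := by ring
              _ = C₃ * (Λ' ^ β₁)⁻¹ * (t * φ ((dist x y ^ α)⁻¹)) := by
                  rw [Real.inv_rpow hΛ'0.le]
          calc (1 - Real.exp (-1))⁻¹ * (1 - Real.exp (-(t * φ ((Λ' * dist x y ^ α)⁻¹))))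
              ≤ (1 - Real.exp (-1))⁻¹ * (t * φ ((Λ' * dist x y ^ α)⁻¹)) :=
                mul_le_mul_of_nonneg_left (one_sub_exp_le _) (inv_pos.mpr hE1).le
            _ ≤ (1 - Real.exp (-1))⁻¹ * (C₃ * (Λ' ^ β₁)⁻¹ * (t * φ ((dist x y ^ α)⁻¹))) :=
                mul_le_mul_of_nonneg_left hsc (inv_pos.mpr hE1).le
            _ = (D * (C₃ * (Λ' ^ β₁)⁻¹)) * (t * φ ((dist x y ^ α)⁻¹)) := by rw [hD]; ring
            _ ≤ c₅/2 * (t * φ ((dist x y ^ α)⁻¹)) :=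
                mul_le_mul_of_nonneg_right hΛ'prop hw0.le
        have hIocu : ENNReal.ofReal (c₅/2 * (t * φ ((dist x y ^ α)⁻¹))) ≤
            μ t (Set.Ioc (dist x y ^ α) (Λ' * dist x y ^ α)) := by
          have hsplit : μ t (Set.Ioi (dist x y ^ α)) ≤
              μ t (Set.Ioc (dist x y ^ α) (Λ' * dist x y ^ α)) +
              μ t (Set.Ioi (Λ' * dist x y ^ α)) := by
            refine le_trans (measure_mono ?_) (measure_union_le _ _)
            intro s hs
            rcases le_or_gt s (Λ' * dist x y ^ α) with h | h
            · exact Or.inl ⟨hs, h⟩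
            · exact Or.inr h
          have hhalf : ENNReal.ofReal (c₅ * (t * φ ((dist x y ^ α)⁻¹))) =
              ENNReal.ofReal (c₅/2 * (t * φ ((dist x y ^ α)⁻¹))) +
              ENNReal.ofReal (c₅/2 * (t * φ ((dist x y ^ α)⁻¹))) := by
            rw [← ENNReal.ofReal_add
              (mul_nonneg (by linarith only [hc₅0]) hw0.le)
              (mul_nonneg (by linarith only [hc₅0]) hw0.le)]
            congr 1
            ring
          have hchain2 : ENNReal.ofReal (c₅/2 * (t * φ ((dist x y ^ α)⁻¹))) +
              ENNReal.ofReal (c₅/2 * (t * φ ((dist x y ^ α)⁻¹))) ≤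
              μ t (Set.Ioc (dist x y ^ α) (Λ' * dist x y ^ α)) +
              ENNReal.ofReal (c₅/2 * (t * φ ((dist x y ^ α)⁻¹))) := by
            rw [← hhalf]
            exact hIoiu.trans (hsplit.trans (add_le_add_right hIoiΛ' _))
          exact (ENNReal.add_le_add_iff_right ENNReal.ofReal_ne_top).mp hchain2
        have hbox2 : ∀ s ∈ Set.Ioc (dist x y ^ α) (Λ' * dist x y ^ α),
            ENNReal.ofReal (C₂⁻¹ * (1 / (C₁ * Λ' ^ eγ *
              (μM (Metric.closedBall x (dist x y))).toReal))) ≤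
            ENNReal.ofReal (p s x y) := by
          intro s hs
          have hs0 : 0 < s := lt_trans hu0 hs.1
          have h1 := (hp s hs0 x y).1
          rw [if_pos hs.1.le] at h1
          apply ENNReal.ofReal_le_ofReal
          refine le_trans ?_ h1
          have hVs1 : 0 < (μM (Metric.closedBall x (s ^ (1/α)))).toReal :=
            hVpos x _ (Real.rpow_pos_of_pos hs0 _)
          have hVs : (μM (Metric.closedBall x (s ^ (1/α)))).toReal ≤
              C₁ * Λ' ^ eγ * (μM (Metric.closedBall x (dist x y))).toReal := by
            have hsb : s ^ (1/α) ≤ (Λ' * dist x y ^ α) ^ (1/α) :=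
              Real.rpow_le_rpow hs0.le hs.2 (by positivity)
            have hbb : (Λ' * dist x y ^ α) ^ (1/α) = Λ' ^ (1/α) * dist x y := by
              rw [Real.mul_rpow hΛ'0.le hu0.le, hud]
            have hΛ'r1 : (1:ℝ) ≤ Λ' ^ (1/α) := Real.one_le_rpow hΛ'1 (by positivity)
            have hVd2 := hVd (Λ' ^ (1/α)) (dist x y) hΛ'r1 hd0
            rw [← Real.rpow_mul hΛ'0.le, ← heγdef] at hVd2
            calc (μM (Metric.closedBall x (s ^ (1/α)))).toReal
                ≤ (μM (Metric.closedBall x ((Λ' * dist x y ^ α) ^ (1/α)))).toReal :=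
                  hVmono _ _ hsb
              _ = (μM (Metric.closedBall x (Λ' ^ (1/α) * dist x y))).toReal := by rw [hbb]
              _ ≤ C₁ * Λ' ^ eγ * (μM (Metric.closedBall x (dist x y))).toReal := hVd2
          calc C₂⁻¹ * (1 / (C₁ * Λ' ^ eγ * (μM (Metric.closedBall x (dist x y))).toReal))
              ≤ C₂⁻¹ * (1 / (μM (Metric.closedBall x (s ^ (1/α)))).toReal) := by
                apply mul_le_mul_of_nonneg_left _ (inv_nonneg.mpr hC₂0.le)
                exact one_div_le_one_div_of_le hVs1 hVs
            _ = C₂⁻¹ * 1 / (μM (Metric.closedBall x (s ^ (1/α)))).toReal := by ring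
        have hlowint2 : ENNReal.ofReal (coff *
            (t * φ (dist x y ^ (-α)) / (μM (Metric.closedBall x (dist x y))).toReal)) ≤
            ∫⁻ s in Set.Ioi (0:ℝ), ENNReal.ofReal (p s x y) ∂μ t := by
          calc ENNReal.ofReal (coff *
                (t * φ (dist x y ^ (-α)) / (μM (Metric.closedBall x (dist x y))).toReal))
              = ENNReal.ofReal (C₂⁻¹ * (1 / (C₁ * Λ' ^ eγ *
                  (μM (Metric.closedBall x (dist x y))).toReal))) *
                ENNReal.ofReal (c₅/2 * (t * φ ((dist x y ^ α)⁻¹))) := by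
                rw [← ENNReal.ofReal_mul
                  (mul_nonneg (inv_nonneg.mpr hC₂0.le) (by positivity))]
                congr 1
                rw [hcoff_def, Real.rpow_neg dist_nonneg α]
                ring
            _ ≤ ENNReal.ofReal (C₂⁻¹ * (1 / (C₁ * Λ' ^ eγ *
                  (μM (Metric.closedBall x (dist x y))).toReal))) *
                μ t (Set.Ioc (dist x y ^ α) (Λ' * dist x y ^ α)) :=
                mul_le_mul_right hIocu _
            _ = ∫⁻ _ in Set.Ioc (dist x y ^ α) (Λ' * dist x y ^ α),
                  ENNReal.ofReal (C₂⁻¹ * (1 / (C₁ * Λ' ^ eγ *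
                    (μM (Metric.closedBall x (dist x y))).toReal))) ∂μ t :=
                (setLIntegral_const _ _).symm
            _ ≤ ∫⁻ s in Set.Ioc (dist x y ^ α) (Λ' * dist x y ^ α),
                  ENNReal.ofReal (p s x y) ∂μ t := setLIntegral_mono hpm hbox2
            _ ≤ ∫⁻ s in Set.Ioi (0:ℝ), ENNReal.ofReal (p s x y) ∂μ t :=
                lintegral_mono_set (fun s hs => lt_trans hu0 hs.1)
        refine le_trans (ENNReal.ofReal_le_ofReal ?_) hlowint2
        rw [if_neg hxy]
        exact mul_le_mul (min_le_right _ _) (min_le_right _ _) (le_min hAnn hBnn) hcoff0.le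
    · -- upper bound
      by_cases hxy : x = y
      · rw [if_pos hxy]
        exact hUBdiag.trans (ENNReal.ofReal_le_ofReal
          (mul_le_mul_of_nonneg_right hConC hAnn))
      · rw [if_neg hxy]
        rcases min_cases (1 / (μM (Metric.closedBall x (T ^ (-(1/α))))).toReal)
          (t * φ (dist x y ^ (-α)) / (μM (Metric.closedBall x (dist x y))).toReal) with
          ⟨hmin, _⟩ | ⟨hmin, _⟩
        · rw [hmin]
          exact hUBdiag.trans (ENNReal.ofReal_le_ofReal
            (mul_le_mul_of_nonneg_right hConC hAnn))
        · rw [hmin]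
          exact (hUBoff hxy).trans (ENNReal.ofReal_le_ofReal
            (mul_le_mul_of_nonneg_right hCoffC hBnn))
  · -- degenerate case : φ ≡ 0 on [0, ∞)
    have hφ1 : φ 1 = 0 := le_antisymm (not_lt.mp hφ1pos) (hφnn 1 one_pos.le)
    have hφz : ∀ θ : ℝ, 0 ≤ θ → φ θ = 0 := by
      intro θ hθ
      rcases eq_or_lt_of_le hθ with h0 | hθ0
      · rw [← h0]; exact hφ0
      rcases le_or_gt θ 1 with h1 | h1
      · have h := hφlo θ hθ0 h1 1 one_pos
        rw [mul_one, hφ1, mul_zero] at h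
        exact le_antisymm h (hφnn θ hθ0.le)
      · have hinv0 : 0 < θ⁻¹ := by positivity
        have h := hφup θ⁻¹ hinv0 (inv_le_one_of_one_le₀ h1.le) θ hθ0
        rw [inv_mul_cancel₀ hθ0.ne', hφ1] at h
        have h2 := hφnn θ hθ0.le
        have h3 : 0 < c₄ * (θ⁻¹) ^ β₂ := by positivity
        nlinarith
    refine ⟨1, 1, one_pos, le_rfl, ?_⟩
    intro t ht x y
    obtain ⟨hprob, hsupp, hlap⟩ := hμ t ht
    haveI := hprob
    have hlap1 : (∫ s, Real.exp (-1 * s) ∂μ t) = Real.exp (-(t * φ 1)) := by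
      rw [hlap 1 one_pos.le]; congr 1; ring
    have hLi := (lap_lint (μ t) hsupp 1 (t * φ 1) one_pos.le hlap1).2
    rw [hφ1, mul_zero, neg_zero, Real.exp_zero, sub_self, ENNReal.ofReal_zero] at hLi
    have hnull : μ t (Set.Ioi 0) = 0 := by
      have hmeasg : Measurable fun s : ℝ => ENNReal.ofReal (1 - Real.exp (-(1 * s))) := by fun_prop
      rw [lintegral_eq_zero_iff hmeasg] at hLi
      apply measure_mono_null ?_ (ae_iff.mp hLi)
      intro s hs
      rw [Set.mem_Ioi] at hs
      simp only [Set.mem_setOf_eq, Pi.zero_apply]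
      intro h0
      rw [ENNReal.ofReal_eq_zero, sub_nonpos] at h0
      have : Real.exp (-(1 * s)) < Real.exp 0 := Real.exp_lt_exp.mpr (by linarith)
      rw [Real.exp_zero] at this
      linarith
    have hIzero : (∫⁻ s in Set.Ioi (0:ℝ), ENNReal.ofReal (p s x y) ∂μ t) = 0 := by
      rw [Measure.restrict_eq_zero.mpr hnull, lintegral_zero_measure]
    have hT : genInv φ (1/t) = 0 := by
      rw [genInv]
      have hempty : {θ : ℝ | 0 < θ ∧ 1/t ≤ φ θ} = ∅ := by
        rw [Set.eq_empty_iff_forall_notMem]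
        intro θ hθ
        rw [Set.mem_setOf_eq] at hθ
        have h1 := hφz θ hθ.1.le
        rw [h1] at hθ
        have : 0 < 1/t := by positivity
        linarith [hθ.2]
      rw [hempty, Real.sInf_empty]
    have hrad : genInv φ (1 / t) ^ (-(1/α)) = 0 := by
      rw [show (1:ℝ)/t = 1/t from rfl, hT]
      exact Real.zero_rpow (by simp [hα.ne'])
    have hV0 : (μM (Metric.closedBall x (genInv φ (1 / t) ^ (-(1/α))))).toReal = 0 := by
      rw [hrad, Metric.closedBall_zero]
      exact vol_point_zero μM hVfin C₁ γ₁ hC₁ hγ₁ (fun x l r hl hr => (hVdoub x l r hl hr).1) x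
    rw [hIzero]
    have harg : (1 * (if x = y then
        1 / (μM (Metric.closedBall x (genInv φ (1 / t) ^ (-(1/α))))).toReal
      else
        min (1 / (μM (Metric.closedBall x (genInv φ (1 / t) ^ (-(1/α))))).toReal)
          (t * φ (dist x y ^ (-α)) / (μM (Metric.closedBall x (dist x y))).toReal))) = 0 := by
      rw [one_mul]
      split_ifs with hxy
      · rw [hV0, div_zero]
      · rw [hV0, div_zero]
        rw [hφz (dist x y ^ (-α)) (Real.rpow_nonneg dist_nonneg _), mul_zero, zero_div]
        simp
    rw [harg, ENNReal.ofReal_zero]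
    exact ⟨le_rfl, zero_le⟩
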